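/- arXiv:1208.3978 — 2 statements merged into one kernel-verified Lean document; each statement's English description precedes it below -/
import Mathlib

section
/- The q = 0 specialisation of the factorised form of ŝk recovers the Hall–Littlewood skew coefficient sk: for partitions μ ⊆ λ, setting q = 0 in t^{n(λ)−n(μ)} Π_{i,j=1}^{l(λ)} [ (qt^{j−i−1};q)_{λ_i−μ_j} (qt^{j−i};q)_{μ_i−μ_j} ] / [ (qt^{j−i−1};q)_{μ_i−μ_j} (qt^{j−i};q)_{λ_i−μ_j} ] yields t^{n(λ/μ)} Π_{i≥1} [λ'_i−μ'_{i+1} choose λ'_i−μ'_i]_t, where n(λ/μ) = Σ_{i≥1} C(λ'_i−μ'_i, 2). -/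
/-!
Common framework: integer partitions, Gaussian binomials, Hall--Littlewood
Pieri coefficients, the ring of symmetric functions realized as polynomials
in the power sums, the Macdonald `(q,t)`-inner product, a characterisation
of the Macdonald polynomials `P_λ(X;q,t)`, skew Macdonald polynomials,
plethystic evaluations and the various Pieri coefficients of
Konvalinka--Lauve and Warnaar.
-/

open scoped BigOperators

noncomputable section

namespace SkewPieriFormalization

/-- An integer partition, encoded as a finitely supported weakly decreasing
sequence of natural numbers; `part j` is the part `λ_{j+1}` (0-indexed). -/
structure Partition where
  part : ℕ →₀ ℕ
  antitone' : ∀ ⦃i j : ℕ⦄, i ≤ j → part j ≤ part i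

namespace Partition

/-- Containment of Young diagrams: `μ ≤ λ` iff `μ_i ≤ λ_i` for all `i`. -/
instance : LE Partition := ⟨fun mu lam => ∀ j : ℕ, mu.part j ≤ lam.part j⟩

/-- `|λ|`, the size (sum of the parts). -/
def size (lam : Partition) : ℕ := lam.part.sum fun _ k => k

/-- `l(λ)`, the number of (nonzero) parts. -/
def length (lam : Partition) : ℕ := lam.part.support.card

/-- `n(λ) = ∑_{i ≥ 1} (i-1) λ_i`. -/
def nstat (lam : Partition) : ℕ := lam.part.sum fun j k => j * k

/-- the `i`-th part `λ_i` (1-indexed). -/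
def row (lam : Partition) (i : ℕ) : ℕ := lam.part (i - 1)

/-- the part `λ'_i = #{j : λ_j ≥ i}` of the conjugate partition (for `i ≥ 1`). -/
def conj (lam : Partition) (i : ℕ) : ℕ :=
  (lam.part.support.filter fun j => i ≤ lam.part j).card

/-- the multiplicity `m_r(λ)` of `r` as a part of `λ`. -/
def mult (lam : Partition) (r : ℕ) : ℕ :=
  (lam.part.support.filter fun j => lam.part j = r).card

/-- `z_λ = ∏_{r ≥ 1} r^{m_r} m_r!`. -/
def zee (lam : Partition) : ℕ :=
  ∏ r ∈ Finset.Icc 1 (lam.part 0), r ^ lam.mult r * Nat.factorial (lam.mult r)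

/-- the partial sum `λ_1 + ⋯ + λ_k`. -/
def psum (lam : Partition) (k : ℕ) : ℕ := ∑ j ∈ Finset.range k, lam.part j

/-- dominance order: `λ ⊵ μ` (for `|λ| = |μ|`). -/
def Dominates (lam mu : Partition) : Prop :=
  mu.size = lam.size ∧ ∀ k : ℕ, mu.psum k ≤ lam.psum k

/-- the one-row partition `(r)`. -/
def single (r : ℕ) : Partition where
  part := Finsupp.single 0 r
  antitone' := by
    intro i j hij
    by_cases hj : j = 0
    · have : i = 0 := by omega
      simp [hj, this]
    · simp only [Finsupp.single_apply]
      split <;> split <;> omega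

/-- the one-column partition `(1^m)`. -/
def column (m : ℕ) : Partition where
  part := Finsupp.onFinset (Finset.range m) (fun j => if j < m then 1 else 0)
    (fun j h => by
      simp only [Finset.mem_range]
      by_contra hc
      simp [hc] at h)
  antitone' := by
    intro i j hij
    simp only [Finsupp.onFinset_apply]
    split <;> split <;> omega

end Partition

variable {F : Type*} [Field F]

/-- the `t`-integer `[n]_t = 1 + t + ⋯ + t^{n-1}`. -/
def qint (t : F) (n : ℕ) : F := ∑ j ∈ Finset.range n, t ^ j

/-- the `t`-factorial. -/
def qfac (t : F) (n : ℕ) : F := ∏ j ∈ Finset.range n, qint t (j + 1)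

/-- the Gaussian binomial coefficient `[n choose k]_t`; it vanishes
unless `0 ≤ k ≤ n`. -/
def qbinom (t : F) (n k : ℤ) : F :=
  if 0 ≤ k ∧ k ≤ n then qfac t n.toNat / (qfac t k.toNat * qfac t (n - k).toNat) else 0

/-- the Hall--Littlewood Pieri coefficient
`ψ'_{λ/μ}(t) = ∏_{i ≥ 1} [λ'_i - λ'_{i+1} choose λ'_i - μ'_i]_t`;
it vanishes unless `μ ⊆ λ` with `λ - μ` a vertical strip. -/
def vsHL (t : F) (lam mu : Partition) : F :=
  ∏ i ∈ Finset.Icc 1 (lam.part 0 + mu.part 0),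
    qbinom t ((lam.conj i : ℤ) - lam.conj (i + 1)) ((lam.conj i : ℤ) - mu.conj i)

open Classical in
/-- the Hall--Littlewood Pieri coefficient `φ_{λ/μ}(t)`, equal to
`∏ (1 - t^{λ'_i - λ'_{i+1}})` over those `i ≥ 1` with `λ'_i = μ'_i + 1` and
`λ'_{i+1} = μ'_{i+1}`, when `μ ⊆ λ` with `λ - μ` a horizontal strip, and
vanishing otherwise. -/
def hsHL (t : F) (lam mu : Partition) : F :=
  if ∀ i : ℕ, mu.conj i ≤ lam.conj i ∧ lam.conj i ≤ mu.conj i + 1 then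
    ∏ i ∈ Finset.Icc 1 (lam.part 0 + mu.part 0),
      if lam.conj i = mu.conj i + 1 ∧ lam.conj (i + 1) = mu.conj (i + 1) then
        1 - t ^ (lam.conj i - lam.conj (i + 1))
      else 1
  else 0

/-- `n(λ/μ) = ∑_{i ≥ 1} C(λ'_i - μ'_i, 2)`. -/
def nskew (lam mu : Partition) : ℕ :=
  ∑ i ∈ Finset.Icc 1 (lam.part 0 + mu.part 0), Nat.choose (lam.conj i - mu.conj i) 2

/-- the Konvalinka--Lauve coefficient
`sk_{λ/μ}(t) = t^{n(λ/μ)} ∏_{i ≥ 1} [λ'_i - μ'_{i+1} choose λ'_i - μ'_i]_t`;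
it vanishes unless `μ ⊆ λ`. -/
def skHL (t : F) (lam mu : Partition) : F :=
  t ^ nskew lam mu *
    ∏ i ∈ Finset.Icc 1 (lam.part 0 + mu.part 0),
      qbinom t ((lam.conj i : ℤ) - mu.conj (i + 1)) ((lam.conj i : ℤ) - mu.conj i)

/-- The ring of symmetric functions over `F`, realized as the polynomial ring
in the power sums: the variable `n` is the power sum `p_{n+1}`. -/
abbrev Sym (F : Type*) [Field F] := MvPolynomial ℕ F

/-- the power sum product `p_λ = p_{λ_1} p_{λ_2} ⋯`. -/
def pprod (lam : Partition) : Sym F :=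
  ∏ j ∈ lam.part.support, MvPolynomial.X (lam.part j - 1)

/-- Macdonald's `(q,t)`-deformation of the Hall inner product, for which the
power sums are orthogonal with `⟨p_λ, p_λ⟩ = z_λ ∏_i (1-q^{λ_i})/(1-t^{λ_i})`. -/
def innerQT (q t : F) (f g : Sym F) : F :=
  ∑ d ∈ f.support,
    f.coeff d * g.coeff d *
      d.prod fun n m =>
        (((n : F) + 1) ^ m * (Nat.factorial m : F)) *
          ((1 - q ^ (n + 1)) / (1 - t ^ (n + 1))) ^ m

/-- the complete homogeneous symmetric function `h_r = ∑_{|κ| = r} z_κ⁻¹ p_κ`. -/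
def hsym (F : Type*) [Field F] (r : ℕ) : Sym F :=
  ∑ᶠ (k : Partition) (_ : k.size = r), ((k.zee : F))⁻¹ • (pprod k : Sym F)

/-- the elementary symmetric function `e_r = ∑_{|κ| = r} (-1)^{r - l(κ)} z_κ⁻¹ p_κ`. -/
def esym (F : Type*) [Field F] (r : ℕ) : Sym F :=
  ∑ᶠ (k : Partition) (_ : k.size = r),
    ((-1 : F) ^ (r - k.length) * (k.zee : F)⁻¹) • (pprod k : Sym F)

/-- `h_μ = h_{μ_1} h_{μ_2} ⋯`. -/
def hprod (F : Type*) [Field F] (mu : Partition) : Sym F :=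
  ∏ j ∈ mu.part.support, hsym F (mu.part j)

/-- Characterisation of the (monic) Macdonald polynomial family
`λ ↦ P_λ(X;q,t)`: the `P_λ` are pairwise orthogonal for the `(q,t)`-inner
product, and `P_λ = m_λ + ∑_{μ ⊲ λ} u_{λμ} m_μ` is unitriangular with respect
to dominance order in the monomial basis.  Since `{h_μ}` is the dual basis of
`{m_μ}` for the classical Hall pairing (the case `q = t`), unitriangularity is
expressed by the last two conditions.  For `q = 0` this characterises the
Hall--Littlewood polynomials `P_λ(X;t)`. -/
def IsMacdonald (q t : F) (P : Partition → Sym F) : Prop :=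
  (∀ lam mu, lam ≠ mu → innerQT q t (P lam) (P mu) = 0) ∧
  (∀ lam, innerQT t t (P lam) (hprod F lam) = 1) ∧
  (∀ lam mu, ¬ Partition.Dominates lam mu → innerQT t t (P lam) (hprod F mu) = 0)

/-- `b_λ = ⟨P_λ, P_λ⟩⁻¹`. -/
def bnorm (q t : F) (P : Partition → Sym F) (lam : Partition) : F :=
  (innerQT q t (P lam) (P lam))⁻¹

/-- `Q_λ = b_λ P_λ`. -/
def macQ (q t : F) (P : Partition → Sym F) (lam : Partition) : Sym F :=
  bnorm q t P lam • P lam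

/-- the skew Macdonald polynomial `Q_{λ/μ}`, defined by
`⟨Q_{λ/μ}, P_ν⟩ = ⟨Q_λ, P_μ P_ν⟩`. -/
def skewQ (q t : F) (P : Partition → Sym F) (lam mu : Partition) : Sym F :=
  ∑ᶠ nu : Partition, innerQT q t (macQ q t P lam) (P mu * P nu) • macQ q t P nu

/-- the skew Macdonald polynomial `P_{λ/μ}`, defined by
`⟨P_{λ/μ}, Q_ν⟩ = ⟨P_λ, Q_μ Q_ν⟩`. -/
def skewP (q t : F) (P : Partition → Sym F) (lam mu : Partition) : Sym F :=
  ∑ᶠ nu : Partition, innerQT q t (P lam) (macQ q t P mu * macQ q t P nu) • P nu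

/-- the Littlewood--Richardson coefficient `f_{μν}^λ(q,t) = ⟨Q_λ, P_μ P_ν⟩`,
so that `P_μ P_ν = ∑_λ f_{μν}^λ P_λ`. -/
def lr (q t : F) (P : Partition → Sym F) (mu nu lam : Partition) : F :=
  innerQT q t (macQ q t P lam) (P mu * P nu)

/-- the plethystic evaluation `f ↦ f((a-b)/(1-t))`, determined on power sums
by `p_r ↦ (a^r - b^r)/(1 - t^r)`. -/
def plethAB (t a b : F) (f : Sym F) : F :=
  MvPolynomial.eval (fun n => (a ^ (n + 1) - b ^ (n + 1)) / (1 - t ^ (n + 1))) f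

/-- `vs_{λ/μ}(q,t) = ψ'_{λ/μ}(q,t) = (-1)^{|λ|-|μ|} Q_{λ/μ}((q-1)/(1-t))`. -/
def vsM (q t : F) (P : Partition → Sym F) (lam mu : Partition) : F :=
  (-1 : F) ^ ((lam.size : ℤ) - (mu.size : ℤ)) * plethAB t q 1 (skewQ q t P lam mu)

/-- `sk_{λ/μ}(q,t) = Q_{λ/μ}((1-q)/(1-t))`. -/
def skM (q t : F) (P : Partition → Sym F) (lam mu : Partition) : F :=
  plethAB t 1 q (skewQ q t P lam mu)

/-- `ŝk_{λ/μ}(q,t) = Q_{λ/μ}((1-q/t)/(1-t))`. -/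
def skHatM (q t : F) (P : Partition → Sym F) (lam mu : Partition) : F :=
  plethAB t 1 (q / t) (skewQ q t P lam mu)

/-- `hs_{λ/μ}(q,t) = φ_{λ/μ}(q,t) = Q_{λ/μ}(1)`, the plethystic evaluation
`p_r ↦ 1`. -/
def hsM (q t : F) (P : Partition → Sym F) (lam mu : Partition) : F :=
  MvPolynomial.eval (fun _ => (1 : F)) (skewQ q t P lam mu)

/-- `ks_{λ/μ}(q,t) = Q_{λ/μ}(-1)`, the plethystic evaluation `p_r ↦ -1`. -/
def ksM (q t : F) (P : Partition → Sym F) (lam mu : Partition) : F :=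
  MvPolynomial.eval (fun _ => (-1 : F)) (skewQ q t P lam mu)

/-- the finite `q`-Pochhammer symbol `(a;q)_k = ∏_{j=0}^{k-1}(1 - a q^j)`. -/
def qPochN (qq a : F) (k : ℕ) : F := ∏ j ∈ Finset.range k, (1 - a * qq ^ j)

/-- the `q`-Pochhammer symbol `(a;q)_k = (a;q)_∞/(a q^k;q)_∞` for `k ∈ ℤ`;
for `k = -m < 0` it equals `1/∏_{i=1}^m (1 - a q^{-i})`. -/
def qPochZ (qq a : F) (k : ℤ) : F :=
  if 0 ≤ k then qPochN qq a k.toNat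
  else (∏ j ∈ Finset.range (-k).toNat, (1 - a * (qq⁻¹) ^ (j + 1)))⁻¹

/-- `(a)_λ = (a;q,t)_λ = ∏_{i ≥ 1} (a t^{1-i}; q)_{λ_i}`. -/
def qtPoch (qq tt a : F) (lam : Partition) : F :=
  ∏ j ∈ lam.part.support, qPochN qq (a * tt ^ (-(j : ℤ))) (lam.part j)

/-- the degree (as a symmetric function) of a power-sum exponent vector. -/
def wt (d : ℕ →₀ ℕ) : ℕ := d.sum fun n m => (n + 1) * m

/-- the degree-`r` homogeneous component of `∏_x (bx;q)_∞/(ax;q)_∞`, namely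
`∑_{|κ| = r} z_κ⁻¹ ∏_i (a^{κ_i} - b^{κ_i})/(1 - q^{κ_i}) · p_κ`. -/
def prodComp (a b qq : F) (r : ℕ) : Sym F :=
  ∑ᶠ (k : Partition) (_ : k.size = r),
    ((k.zee : F)⁻¹ *
        ∏ j ∈ k.part.support,
          (a ^ k.part j - b ^ k.part j) / (1 - qq ^ k.part j)) • (pprod k : Sym F)

/-- `∏_x (bx;q)_∞/(ax;q)_∞`, where `(cx;q)_∞ = ∏_{j ≥ 0}(1 - cx q^j)`, as a
formal power series in the power sums. -/
def prodSeries (a b qq : F) : MvPowerSeries ℕ F :=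
  fun d => MvPolynomial.coeff d (prodComp a b qq (wt d))

/-- the formal (possibly infinite) sum `∑_i c_i g_i` of symmetric functions,
as a formal power series in the power sums. -/
def sumSeries {ι : Type*} (c : ι → F) (g : ι → Sym F) : MvPowerSeries ℕ F :=
  fun d => ∑ᶠ i : ι, c i * MvPolynomial.coeff d (g i)

/-- `ℚ(t)` -/
abbrev F1 : Type := RatFunc ℚ
/-- `ℚ(t)(q)` -/
abbrev F2 : Type := RatFunc F1
/-- `ℚ(t)(q)(a)` -/
abbrev F3 : Type := RatFunc F2
/-- `ℚ(t)(q)(a)(b)` -/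
abbrev F4 : Type := RatFunc F3

instance : Field F2 := inferInstance
instance : Field F3 := inferInstance
instance : Field F4 := inferInstance

/-- the indeterminate `t` in `ℚ(t)`. -/
def t1 : F1 := RatFunc.X
/-- the indeterminate `q` in `ℚ(t)(q)`. -/
def q2 : F2 := RatFunc.X
/-- the indeterminate `t` in `ℚ(t)(q)`. -/
def t2 : F2 := RatFunc.C t1
/-- the indeterminate `a` in `ℚ(t)(q)(a)`. -/
def a3 : F3 := RatFunc.X
/-- the indeterminate `q` in `ℚ(t)(q)(a)`. -/
def q3 : F3 := RatFunc.C q2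
/-- the indeterminate `t` in `ℚ(t)(q)(a)`. -/
def t3 : F3 := RatFunc.C t2
/-- the indeterminate `b` in `ℚ(t)(q)(a)(b)`. -/
def b4 : F4 := RatFunc.X
/-- the indeterminate `a` in `ℚ(t)(q)(a)(b)`. -/
def a4 : F4 := RatFunc.C a3
/-- the indeterminate `q` in `ℚ(t)(q)(a)(b)`. -/
def q4 : F4 := RatFunc.C q3
/-- the indeterminate `t` in `ℚ(t)(q)(a)(b)`. -/
def t4 : F4 := RatFunc.C t3



/-! ### Auxiliary lemmas -/

section Aux

-- ## Basic facts about `t1`, `q2`, `t2`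

lemma aux_X_pow_ne_one (K : Type*) [Field K] {n : ℕ} (hn : n ≠ 0) :
    (RatFunc.X : RatFunc K) ^ n ≠ 1 := by
  intro h
  rw [RatFunc.X, ← map_pow, ← map_one (algebraMap (Polynomial K) (RatFunc K))] at h
  have h2 := congrArg Polynomial.natDegree (RatFunc.algebraMap_injective K h)
  simp [Polynomial.natDegree_X_pow] at h2
  exact hn h2

lemma aux_X_zpow_eq_one (K : Type*) [Field K] {e : ℤ}
    (h : (RatFunc.X : RatFunc K) ^ e = 1) : e = 0 := by
  rcases lt_trichotomy e 0 with he | he | he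
  · exfalso
    apply aux_X_pow_ne_one K (n := (-e).toNat) (by omega)
    have : (RatFunc.X : RatFunc K) ^ ((-e).toNat : ℤ) = 1 := by
      rw [show ((-e).toNat : ℤ) = -e by omega, zpow_neg, h, inv_one]
    rwa [zpow_natCast] at this
  · exact he
  · exfalso
    apply aux_X_pow_ne_one K (n := e.toNat) (by omega)
    have : (RatFunc.X : RatFunc K) ^ (e.toNat : ℤ) = 1 := by
      rw [show (e.toNat : ℤ) = e by omega, h]
    rwa [zpow_natCast] at this

lemma t1_ne_zero : t1 ≠ 0 := RatFunc.X_ne_zero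
lemma t1_zpow_ne_one {e : ℤ} (he : e ≠ 0) : t1 ^ e ≠ 1 := fun h => he (aux_X_zpow_eq_one ℚ h)
lemma one_sub_t1_zpow_ne_zero {e : ℤ} (he : e ≠ 0) : 1 - t1 ^ e ≠ 0 := by
  intro h; exact t1_zpow_ne_one he (by linear_combination -h)
lemma one_sub_t1_pow_ne_zero {m : ℕ} (hm : m ≠ 0) : 1 - t1 ^ m ≠ 0 := by
  have := one_sub_t1_zpow_ne_zero (e := (m : ℤ)) (by omega)
  rwa [zpow_natCast] at this
lemma q2_ne_zero : q2 ≠ 0 := RatFunc.X_ne_zero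
lemma t2_ne_zero : t2 ≠ 0 := by
  rw [show t2 = RatFunc.C t1 from rfl]
  exact fun h => t1_ne_zero (by simpa using h)

lemma t2_zpow (e : ℤ) : t2 ^ e = RatFunc.C (t1 ^ e) :=
  (map_zpow₀ (RatFunc.C : F1 →+* F2) t1 e).symm

lemma q2_t2_ne_one {c e : ℤ} (h : ¬ (c = 0 ∧ e = 0)) : q2 ^ c * t2 ^ e ≠ 1 := by
  intro hq
  rw [t2_zpow] at hq
  set y := t1 ^ e with hy
  have hy0 : y ≠ 0 := zpow_ne_zero _ t1_ne_zero
  rcases lt_trichotomy c 0 with hc | hc | hc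
  · have h2 : RatFunc.C y = (RatFunc.X : F2) ^ ((-c).toNat) := by
      have h3 : (q2 : F2) ^ (-c) * (q2 ^ c * RatFunc.C y) = q2 ^ (-c) := by rw [hq, mul_one]
      rw [← mul_assoc, ← zpow_add₀ q2_ne_zero, neg_add_cancel, zpow_zero, one_mul] at h3
      rw [h3, ← zpow_natCast, q2]
      congr 1; omega
    rw [show (RatFunc.C y : F2) = algebraMap (Polynomial F1) F2 (Polynomial.C y) from
          (RatFunc.algebraMap_C y).symm,
        RatFunc.X, ← map_pow] at h2
    have h4 := congrArg Polynomial.natDegree (RatFunc.algebraMap_injective F1 h2)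
    simp [Polynomial.natDegree_X_pow] at h4
    omega
  · rw [hc, zpow_zero, one_mul] at hq
    have hy1 : y = 1 := by
      have h5 : RatFunc.C y = RatFunc.C (1 : F1) := by rw [hq, map_one]
      exact (RatFunc.C (K := F1)).injective h5
    exact h ⟨hc, aux_X_zpow_eq_one ℚ (hy ▸ hy1)⟩
  · have h2 : (RatFunc.X : F2) ^ (c.toNat) * RatFunc.C y = 1 := by
      rw [← hq, q2, ← zpow_natCast]; congr 2; omega
    rw [show (RatFunc.C y : F2) = algebraMap (Polynomial F1) F2 (Polynomial.C y) from
          (RatFunc.algebraMap_C y).symm,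
        RatFunc.X, ← map_pow, ← map_mul, ← map_one (algebraMap (Polynomial F1) F2)] at h2
    have h4 := congrArg Polynomial.natDegree (RatFunc.algebraMap_injective F1 h2)
    rw [Polynomial.natDegree_mul (pow_ne_zero _ Polynomial.X_ne_zero)
          (by simpa using hy0), Polynomial.natDegree_X_pow,
        Polynomial.natDegree_C, Polynomial.natDegree_one] at h4
    omega

lemma one_sub_q2_t2_ne_zero {c e : ℤ} (h : ¬ (c = 0 ∧ e = 0)) : 1 - q2 ^ c * t2 ^ e ≠ 0 := by
  intro hh; exact q2_t2_ne_one h (by linear_combination -hh)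

-- ## `qPochZ` lemmas

lemma qPochZ_succ {F : Type*} [Field F] (qq a : F) {m : ℤ} (hq : qq ≠ 0)
    (hm : m < 0 → 1 - a * qq ^ m ≠ 0) :
    qPochZ qq a (m + 1) = qPochZ qq a m * (1 - a * qq ^ m) := by
  rcases lt_trichotomy m 0 with h | h | h
  · have hne := hm h
    rcases eq_or_lt_of_le (show m ≤ -1 by omega) with h1 | h1
    · subst h1
      simp only [qPochZ]
      norm_num [qPochN]
      exact (inv_mul_cancel₀ (by rw [← zpow_neg_one]; exact hne)).symm
    · have hm1 : m + 1 < 0 := by omega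
      simp only [qPochZ, if_neg (by omega : ¬ (0:ℤ) ≤ m), if_neg (by omega : ¬ (0:ℤ) ≤ m + 1)]
      have hcard : (-m).toNat = (-(m+1)).toNat + 1 := by omega
      rw [hcard, Finset.prod_range_succ]
      have : (1 - a * qq⁻¹ ^ ((-(m+1)).toNat + 1)) = 1 - a * qq ^ m := by
        rw [← zpow_natCast qq⁻¹, inv_zpow, ← zpow_neg]
        congr 1
        have hn : (((-(m+1)).toNat : ℤ)) = -(m+1) := Int.toNat_of_nonneg (by omega)
        push_cast
        rw [hn]
        ring
      rw [this, mul_inv, mul_assoc, inv_mul_cancel₀ hne, mul_one]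
  · subst h; simp [qPochZ, qPochN]
  · have h0 : (0:ℤ) ≤ m := le_of_lt h
    simp only [qPochZ, if_pos h0, if_pos (by omega : (0:ℤ) ≤ m + 1)]
    have : (m+1).toNat = m.toNat + 1 := by omega
    rw [this, qPochN, qPochN, Finset.prod_range_succ]
    have h2 : (qq : F) ^ (m.toNat) = qq ^ m := by
      rw [← zpow_natCast]; congr 1; omega
    rw [h2]

lemma qPochZ_split {F : Type*} [Field F] (qq a : F) (B : ℤ) (k : ℕ) (hq : qq ≠ 0)
    (hB : ∀ m : ℤ, B ≤ m → m < 0 → 1 - a * qq ^ m ≠ 0) :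
    qPochZ qq a (B + k) = qPochZ qq a B * ∏ s ∈ Finset.range k, (1 - a * qq ^ (B + s)) := by
  induction k with
  | zero => simp
  | succ n ih =>
    have : B + (n+1 : ℕ) = (B + n) + 1 := by push_cast; ring
    rw [this, qPochZ_succ qq a hq (fun h => hB _ (by omega) h), ih, Finset.prod_range_succ,
      mul_assoc]

lemma qPochZ_ne_zero {F : Type*} [Field F] (qq a : F) (B : ℤ)
    (hpos : ∀ j : ℕ, 1 - a * qq ^ (j:ℤ) ≠ 0)
    (hneg : B < 0 → ∀ m : ℤ, m < 0 → 1 - a * qq ^ m ≠ 0) :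
    qPochZ qq a B ≠ 0 := by
  rcases le_or_gt 0 B with h | h
  · simp only [qPochZ, if_pos h, qPochN]
    apply Finset.prod_ne_zero_iff.mpr
    intro j _
    have := hpos j
    rwa [zpow_natCast] at this
  · simp only [qPochZ, if_neg (by omega : ¬ (0:ℤ) ≤ B)]
    apply inv_ne_zero
    apply Finset.prod_ne_zero_iff.mpr
    intro j _
    have := hneg h (-(j+1 : ℕ)) (by omega)
    rwa [zpow_neg, ← inv_zpow, zpow_natCast] at this

-- ## evaluation helper

lemma eval_div_poly {K : Type*} [Field K] (P Q : Polynomial K) (x : K) (hQ : Q.eval x ≠ 0) :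
    RatFunc.eval (RingHom.id K) x
      (algebraMap (Polynomial K) (RatFunc K) P / algebraMap (Polynomial K) (RatFunc K) Q) =
      P.eval x / Q.eval x := by
  have hQ0 : Q ≠ 0 := fun h => hQ (by simp [h])
  set y := algebraMap (Polynomial K) (RatFunc K) P / algebraMap (Polynomial K) (RatFunc K) Q
    with hy
  obtain ⟨c, hc⟩ := RatFunc.denom_div_dvd P Q
  have hden : Polynomial.eval₂ (RingHom.id K) x y.denom ≠ 0 := by
    intro h0
    apply hQ
    rw [hc, Polynomial.eval_mul]
    have : Polynomial.eval₂ (RingHom.id K) x y.denom = y.denom.eval x := rfl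
    rw [this] at h0
    rw [h0, zero_mul]
  have hmul : y * algebraMap (Polynomial K) (RatFunc K) Q
      = algebraMap (Polynomial K) (RatFunc K) P := by
    rw [hy, div_mul_cancel₀]
    exact fun h => hQ0 ((map_eq_zero_iff _ (RatFunc.algebraMap_injective K)).mp h)
  have heval := RatFunc.eval_mul (f := RingHom.id K) (a := x) hden
      (by rw [RatFunc.denom_algebraMap]; simp : Polynomial.eval₂ (RingHom.id K) x
        (RatFunc.denom (algebraMap (Polynomial K) (RatFunc K) Q)) ≠ 0)
  rw [hmul] at heval
  rw [RatFunc.eval_algebraMap, RatFunc.eval_algebraMap] at heval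
  have hP : ∀ R : Polynomial K, Polynomial.eval₂ (RingHom.id K) x
      (algebraMap (Polynomial K) (Polynomial K) R) = R.eval x := by
    intro R
    simp [Polynomial.eval₂_eq_eval_map, Polynomial.map_id]
  rw [hP, hP] at heval
  rw [eq_div_iff hQ]
  exact heval.symm

end Aux

-- ## Partition lemmas

namespace Partition

lemma lt_conj_iff (lam : Partition) {r : ℕ} (hr : 1 ≤ r) (j : ℕ) :
    j < lam.conj r ↔ r ≤ lam.part j := by
  constructor
  · intro hj
    by_contra hc
    push_neg at hc
    have hsub : (lam.part.support.filter fun j' => r ≤ lam.part j') ⊆ Finset.range j := by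
      intro j' hj'
      simp only [Finset.mem_filter] at hj'
      simp only [Finset.mem_range]
      by_contra hge
      push_neg at hge
      exact absurd (le_trans hj'.2 (lam.antitone' hge)) (by omega)
    have := Finset.card_le_card hsub
    simp only [Finset.card_range] at this
    exact absurd (lt_of_lt_of_le hj this) (lt_irrefl j)
  · intro hj
    have hsub : Finset.range (j+1) ⊆ lam.part.support.filter fun j' => r ≤ lam.part j' := by
      intro j' hj'
      simp only [Finset.mem_range] at hj'
      have h1 : r ≤ lam.part j' := le_trans hj (lam.antitone' (by omega))
      simp only [Finset.mem_filter, Finsupp.mem_support_iff]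
      exact ⟨by omega, h1⟩
    have := Finset.card_le_card hsub
    simp only [Finset.card_range] at this
    exact lt_of_lt_of_le (by omega) this

lemma filter_eq_range (lam : Partition) {r : ℕ} (hr : 1 ≤ r) :
    (lam.part.support.filter fun j' => r ≤ lam.part j') = Finset.range (lam.conj r) := by
  ext j
  simp only [Finset.mem_filter, Finset.mem_range, Finsupp.mem_support_iff]
  rw [← lt_conj_iff lam hr j]
  constructor
  · exact fun h => h.2
  · intro h
    refine ⟨?_, h⟩
    have := (lt_conj_iff lam hr j).mp h
    omega

lemma le_conj_iff (lam : Partition) {r i : ℕ} (hr : 1 ≤ r) (hi : 1 ≤ i) :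
    i ≤ lam.conj r ↔ r ≤ lam.row i := by
  rw [row, ← lt_conj_iff lam hr]
  omega

lemma conj_le_length (lam : Partition) (r : ℕ) : lam.conj r ≤ lam.length :=
  Finset.card_le_card (Finset.filter_subset _ _)

lemma conj_antitone (lam : Partition) {r r' : ℕ} (h : r ≤ r') : lam.conj r' ≤ lam.conj r := by
  apply Finset.card_le_card
  intro j hj
  simp only [Finset.mem_filter] at *
  exact ⟨hj.1, le_trans h hj.2⟩

lemma length_mono {mu lam : Partition} (h : mu ≤ lam) : mu.length ≤ lam.length := by
  apply Finset.card_le_card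
  intro j hj
  simp only [Finsupp.mem_support_iff] at *
  have := h j
  omega

lemma conj_mono {mu lam : Partition} (h : mu ≤ lam) {r : ℕ} (hr : 1 ≤ r) :
    mu.conj r ≤ lam.conj r := by
  by_contra hc
  push_neg at hc
  have h2 := (lt_conj_iff mu hr (lam.conj r)).mp hc
  have h3 := (lt_conj_iff lam hr (lam.conj r)).mpr (le_trans h2 (h _))
  omega

lemma row_antitone (lam : Partition) {i i' : ℕ} (hii : i ≤ i') (hi : 1 ≤ i) :
    lam.row i' ≤ lam.row i := lam.antitone' (by omega)

lemma row_le_head (lam : Partition) (i : ℕ) : lam.row i ≤ lam.part 0 :=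
  lam.antitone' (Nat.zero_le _)

lemma nstat_eq_sum_conj (lam : Partition) {N : ℕ} (hN : lam.part 0 ≤ N) :
    lam.nstat = ∑ r ∈ Finset.Icc 1 N, Nat.choose (lam.conj r) 2 := by
  rw [nstat, Finsupp.sum]
  have step : ∀ j ∈ lam.part.support, j * lam.part j
      = ∑ r ∈ Finset.Icc 1 N, if r ≤ lam.part j then j else 0 := by
    intro j hj
    rw [← Finset.sum_filter]
    have : Finset.filter (fun r => r ≤ lam.part j) (Finset.Icc 1 N)
        = Finset.Icc 1 (lam.part j) := by
      ext r
      simp only [Finset.mem_filter, Finset.mem_Icc]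
      have := lam.antitone' (Nat.zero_le j)
      omega
    rw [this]
    simp [Nat.card_Icc, mul_comm]
  rw [Finset.sum_congr rfl step, Finset.sum_comm]
  apply Finset.sum_congr rfl
  intro r hr
  simp only [Finset.mem_Icc] at hr
  rw [← Finset.sum_filter, filter_eq_range lam hr.1]
  rw [Finset.sum_range_id, Nat.choose_two_right]

end Partition

-- ## the factor polynomials and their values

/-- The numerator/denominator polynomial of a single factor
`(1 - q^c t^e)` (normalised to be regular and nonvanishing at `q = 0`). -/
def Pp (c : ℤ) (e : ℤ) : Polynomial F1 :=
  if 0 < c then 1 - Polynomial.C (t1 ^ e) * Polynomial.X ^ c.toNat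
  else if c = 0 then Polynomial.C (1 - t1 ^ e)
  else Polynomial.X ^ (-c).toNat - Polynomial.C (t1 ^ e)

/-- the value of a factor ratio at `q = 0`. -/
def wval (c : ℤ) (e e' : ℤ) : F1 := (Pp c e).eval 0 / (Pp c e').eval 0

lemma Pp_map (c e : ℤ) :
    algebraMap (Polynomial F1) F2 (Pp c e)
      = q2 ^ (-(min c 0)) * (1 - q2 ^ c * t2 ^ e) := by
  have hX : algebraMap (Polynomial F1) F2 Polynomial.X = q2 := rfl
  rcases lt_trichotomy c 0 with hc | hc | hc
  · rw [Pp, if_neg (by omega), if_neg (by omega)]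
    rw [map_sub, map_pow, hX, RatFunc.algebraMap_C]
    rw [show min c 0 = c by omega]
    have h1 : (q2 : F2) ^ ((-c).toNat) = q2 ^ (-c) := by
      rw [← zpow_natCast]; congr 1; omega
    rw [h1, mul_sub, mul_one, mul_comm (q2 ^ (-c)) (q2 ^ c * t2 ^ e), mul_right_comm,
      ← zpow_add₀ q2_ne_zero, add_neg_cancel, zpow_zero, one_mul, t2_zpow]
  · subst hc
    rw [Pp, if_neg (by omega), if_pos rfl]
    rw [RatFunc.algebraMap_C, map_sub, map_one]
    rw [show min (0:ℤ) 0 = 0 from rfl]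
    simp only [neg_zero, zpow_zero, one_mul]
    rw [t2_zpow]
  · rw [Pp, if_pos hc]
    rw [map_sub, map_one, map_mul, map_pow, hX, RatFunc.algebraMap_C]
    rw [show min c 0 = 0 by omega]
    simp only [neg_zero, zpow_zero, one_mul]
    have h1 : (q2 : F2) ^ (c.toNat) = q2 ^ c := by
      rw [← zpow_natCast]; congr 1; omega
    rw [h1, t2_zpow, mul_comm (RatFunc.C (t1 ^ e)) (q2 ^ c)]

lemma Pp_div (c e e' : ℤ) :
    algebraMap (Polynomial F1) F2 (Pp c e) / algebraMap (Polynomial F1) F2 (Pp c e')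
      = (1 - q2 ^ c * t2 ^ e) / (1 - q2 ^ c * t2 ^ e') := by
  rw [Pp_map, Pp_map, mul_div_mul_left]
  exact zpow_ne_zero _ q2_ne_zero

lemma Pp_eval (c e : ℤ) :
    (Pp c e).eval 0 = if 0 < c then 1 else if c = 0 then 1 - t1 ^ e else -t1 ^ e := by
  rcases lt_trichotomy c 0 with hc | hc | hc
  · rw [Pp, if_neg (by omega), if_neg (by omega), if_neg (by omega), if_neg (by omega)]
    rw [Polynomial.eval_sub, Polynomial.eval_pow, Polynomial.eval_X, Polynomial.eval_C,
      zero_pow (by omega : (-c).toNat ≠ 0), zero_sub]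
  · subst hc
    rw [Pp, if_neg (by omega), if_pos rfl, if_neg (by omega), if_pos rfl, Polynomial.eval_C]
  · rw [Pp, if_pos hc, if_pos hc]
    rw [Polynomial.eval_sub, Polynomial.eval_one, Polynomial.eval_mul, Polynomial.eval_pow,
      Polynomial.eval_X, Polynomial.eval_C, zero_pow (by omega : c.toNat ≠ 0), mul_zero, sub_zero]

lemma Pp_eval_ne_zero {c e : ℤ} (he : c = 0 → e ≠ 0) : (Pp c e).eval 0 ≠ 0 := by
  rw [Pp_eval]
  split
  · exact one_ne_zero
  · split
    · next h1 h2 => exact one_sub_t1_zpow_ne_zero (he h2)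
    · exact neg_ne_zero.mpr (zpow_ne_zero _ t1_ne_zero)

lemma wval_pos {c : ℤ} (hc : 0 < c) (e e' : ℤ) : wval c e e' = 1 := by
  rw [wval, Pp_eval, Pp_eval, if_pos hc, if_pos hc, div_one]

lemma wval_zero (e e' : ℤ) : wval 0 e e' = (1 - t1 ^ e) / (1 - t1 ^ e') := by
  rw [wval, Pp_eval, Pp_eval]
  norm_num

lemma wval_neg {c : ℤ} (hc : c < 0) (e e' : ℤ) : wval c e e' = t1 ^ (e - e') := by
  rw [wval, Pp_eval, Pp_eval, if_neg (by omega), if_neg (by omega), if_neg (by omega),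
    if_neg (by omega), neg_div_neg_eq, ← zpow_sub₀ t1_ne_zero]

-- ## telescoping and product helpers

lemma telescope (f : ℕ → F1) {a b : ℕ} (hab : a ≤ b) (hf : ∀ n, a ≤ n → n ≤ b → f n ≠ 0) :
    ∏ j ∈ Finset.Ioc a b, (f (j-1) / f j) = f a / f b := by
  induction b, hab using Nat.le_induction with
  | base => simp [div_self (hf a le_rfl le_rfl)]
  | succ b hab ih =>
    rw [Finset.prod_Ioc_succ_top (by omega), ih (fun n h1 h2 => hf n h1 (by omega))]
    have hb : f b ≠ 0 := hf b hab (by omega)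
    have hstep : (b + 1) - 1 = b := rfl
    rw [hstep, div_mul_div_comm, mul_comm (f a) (f b), mul_div_mul_left _ _ hb]

lemma Ioc_eq_Ico (a b : ℕ) : Finset.Ioc a b = Finset.Ico (a+1) (b+1) := by
  ext x
  simp only [Finset.mem_Ioc, Finset.mem_Ico]
  omega

lemma Icc_one_eq_Ioc_zero (n : ℕ) : Finset.Icc 1 n = Finset.Ioc 0 n := by
  ext x
  simp only [Finset.mem_Icc, Finset.mem_Ioc]
  omega

lemma reindex_sub {M : Type*} [CommMonoid M] (g : ℕ → M) {a K c' : ℕ} (h1 : c' ≤ a) :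
    ∏ i ∈ Finset.Ioc a K, g (i - c') = ∏ m ∈ Finset.Ioc (a - c') (K - c'), g m := by
  rcases le_or_gt a K with h2 | h2
  · rw [Ioc_eq_Ico, Ioc_eq_Ico, Finset.prod_Ico_eq_prod_range, Finset.prod_Ico_eq_prod_range]
    have hc : K + 1 - (a + 1) = (K - c' + 1) - (a - c' + 1) := by omega
    rw [← hc]
    apply Finset.prod_congr rfl
    intro x hx
    congr 1
    omega
  · rw [Finset.Ioc_eq_empty (by omega), Finset.Ioc_eq_empty (by omega)]
    simp

-- ## the Gaussian binomial as a ratio of products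

/-- `∏_{m=1}^{n} (1 - t^m)`. -/
def W (n : ℕ) : F1 := ∏ m ∈ Finset.Ioc 0 n, (1 - t1 ^ m)

lemma W_ne_zero (n : ℕ) : W n ≠ 0 := by
  apply Finset.prod_ne_zero_iff.mpr
  intro m hm
  simp only [Finset.mem_Ioc] at hm
  exact one_sub_t1_pow_ne_zero (by omega)

lemma one_sub_t1_ne_zero : 1 - t1 ≠ 0 := by
  have := one_sub_t1_pow_ne_zero (m := 1) one_ne_zero
  rwa [pow_one] at this

lemma qfac_eq (n : ℕ) : qfac t1 n * (1 - t1) ^ n = W n := by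
  rw [qfac, show (1 - t1)^n = ∏ _j ∈ Finset.range n, (1 - t1) by
        rw [Finset.prod_const, Finset.card_range],
    ← Finset.prod_mul_distrib]
  rw [W, Ioc_eq_Ico, Finset.prod_Ico_eq_prod_range]
  have hn : n + 1 - 1 = n := rfl
  rw [hn]
  apply Finset.prod_congr rfl
  intro j _
  have hgeo := geom_sum_mul t1 (j+1)
  rw [qint]
  have h1x : 1 + j = j + 1 := by omega
  rw [h1x]
  linear_combination -hgeo

lemma qfac_div (n : ℕ) : qfac t1 n = W n / (1 - t1) ^ n := by
  rw [eq_div_iff (pow_ne_zero _ one_sub_t1_ne_zero), qfac_eq]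

lemma qbinom_eq {c' a K : ℕ} (h1 : c' ≤ a) (h2 : a ≤ K) :
    qbinom t1 ((K : ℤ) - c') ((K : ℤ) - a)
      = (∏ m ∈ Finset.Ioc (a - c') (K - c'), (1 - t1 ^ m)) / W (K - a) := by
  rw [qbinom, if_pos (by constructor <;> omega)]
  rw [show (((K:ℤ) - a).toNat) = K - a by omega,
      show (((K:ℤ) - c').toNat) = K - c' by omega,
      show (((K:ℤ) - c' - ((K:ℤ) - a)).toNat) = a - c' by omega]
  have hW : W (a - c') * (∏ m ∈ Finset.Ioc (a - c') (K - c'), (1 - t1 ^ m)) = W (K - c') :=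
    Finset.prod_Ioc_consecutive _ (by omega) (by omega)
  rw [qfac_div, qfac_div, qfac_div, ← hW]
  have hpow : (1 - t1)^(K - a) * (1 - t1)^(a - c') = (1 - t1)^(K - c') := by
    rw [← pow_add]; congr 1; omega
  rw [div_mul_div_comm, hpow]
  rw [div_div_div_eq]
  rw [div_eq_div_iff
    (mul_ne_zero (pow_ne_zero _ one_sub_t1_ne_zero) (mul_ne_zero (W_ne_zero _) (W_ne_zero _)))
    (W_ne_zero _)]
  ring

-- ## choose identity and nstat splitting

lemma choose_two_succ (n : ℕ) : (n+1).choose 2 = n.choose 2 + n := by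
  rw [Nat.choose_succ_succ, Nat.choose_one_right, Nat.add_comm]

lemma choose_split {a K : ℕ} (h : a ≤ K) :
    K.choose 2 = a.choose 2 + a * (K - a) + (K - a).choose 2 := by
  obtain ⟨k, rfl⟩ := Nat.exists_eq_add_of_le h
  have key : ∀ k : ℕ, (a + k).choose 2 = a.choose 2 + a * k + k.choose 2 := by
    intro k
    induction k with
    | zero => simp
    | succ n ih =>
      have h3 : a + (n+1) = (a+n)+1 := by omega
      rw [h3, choose_two_succ (a+n), ih, choose_two_succ n, Nat.mul_succ]
      omega
  rw [Nat.add_sub_cancel_left]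
  exact key k

lemma nstat_identity (lam mu : Partition) (h : mu ≤ lam) :
    lam.nstat = mu.nstat
      + (∑ r ∈ Finset.Icc 1 (lam.part 0 + mu.part 0),
          mu.conj r * (lam.conj r - mu.conj r))
      + nskew lam mu := by
  rw [Partition.nstat_eq_sum_conj lam (N := lam.part 0 + mu.part 0) (by omega),
      Partition.nstat_eq_sum_conj mu (N := lam.part 0 + mu.part 0)
        (by have := h 0; omega), nskew]
  rw [← Finset.sum_add_distrib, ← Finset.sum_add_distrib]
  apply Finset.sum_congr rfl
  intro r hr
  simp only [Finset.mem_Icc] at hr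
  exact choose_split (Partition.conj_mono h hr.1)

-- ## the main combinatorial computation at `q = 0`

lemma reindex_row {M : Type*} [CommMonoid M] (g : ℕ → M) (a b : ℕ) :
    ∏ s ∈ Finset.range (b - a), g (a + s + 1) = ∏ r ∈ Finset.Ioc a b, g r := by
  rw [Ioc_eq_Ico, Finset.prod_Ico_eq_prod_range]
  rw [show b + 1 - (a + 1) = b - a by omega]
  apply Finset.prod_congr rfl
  intro x _
  congr 1
  omega

lemma prod_w (lam mu : Partition) (h : mu ≤ lam) {i s : ℕ} (hi1 : 1 ≤ i)
    (hiL : i ≤ lam.length) (hs : s < lam.row i - mu.row i) :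
    ∏ j ∈ Finset.Icc 1 lam.length,
        wval ((mu.row i : ℤ) - mu.row j + 1 + s) ((j:ℤ) - i - 1) ((j:ℤ) - i)
      = (t1⁻¹) ^ (mu.conj (mu.row i + s + 1 + 1)) *
        ((1 - t1 ^ ((mu.conj (mu.row i + s + 1 + 1) : ℤ) - i)) /
         (1 - t1 ^ ((mu.conj (mu.row i + s + 1) : ℤ) - i))) := by
  obtain ⟨r, hr⟩ : ∃ r, r = mu.row i + s + 1 := ⟨_, rfl⟩
  rw [show mu.row i + s + 1 + 1 = r + 1 by omega, show mu.row i + s + 1 = r by omega]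
  have hr1 : 1 ≤ r := by omega
  have hm10 : mu.conj (r+1) ≤ mu.conj r := Partition.conj_antitone mu (by omega)
  have hm0i : mu.conj r < i := by
    have h2 : ¬ i ≤ mu.conj r := by
      rw [Partition.le_conj_iff mu hr1 hi1]; omega
    omega
  have hm0L : mu.conj r ≤ lam.length :=
    le_trans (Partition.conj_le_length mu r) (Partition.length_mono h)
  rw [Icc_one_eq_Ioc_zero,
    ← Finset.prod_Ioc_consecutive _ (Nat.zero_le (mu.conj r)) hm0L,
    ← Finset.prod_Ioc_consecutive _ (Nat.zero_le (mu.conj (r+1))) hm10]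
  have hP3 : (∏ j ∈ Finset.Ioc (mu.conj r) lam.length,
      wval ((mu.row i : ℤ) - mu.row j + 1 + s) ((j:ℤ) - i - 1) ((j:ℤ) - i)) = 1 := by
    apply Finset.prod_eq_one
    intro j hj
    simp only [Finset.mem_Ioc] at hj
    have hj1 : 1 ≤ j := by omega
    have hrow : mu.row j < r := by
      have := (Partition.le_conj_iff mu hr1 hj1).mpr
      by_contra hcon
      push_neg at hcon
      exact absurd (this hcon) (by omega)
    exact wval_pos (by omega) _ _
  have hP1 : (∏ j ∈ Finset.Ioc 0 (mu.conj (r+1)),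
      wval ((mu.row i : ℤ) - mu.row j + 1 + s) ((j:ℤ) - i - 1) ((j:ℤ) - i))
      = (t1⁻¹) ^ (mu.conj (r+1)) := by
    rw [Finset.prod_congr rfl (g := fun _ => t1⁻¹) (fun j hj => ?_)]
    · rw [Finset.prod_const, Nat.card_Ioc, Nat.sub_zero]
    · simp only [Finset.mem_Ioc] at hj
      have hj1 : 1 ≤ j := by omega
      have hrow : r + 1 ≤ mu.row j := (Partition.le_conj_iff mu (by omega) hj1).mp hj.2
      rw [wval_neg (by omega) _ _, show ((j:ℤ) - i - 1) - ((j:ℤ) - i) = -1 by ring,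
        zpow_neg_one]
  have hP2 : (∏ j ∈ Finset.Ioc (mu.conj (r+1)) (mu.conj r),
      wval ((mu.row i : ℤ) - mu.row j + 1 + s) ((j:ℤ) - i - 1) ((j:ℤ) - i))
      = (1 - t1 ^ ((mu.conj (r+1) : ℤ) - i)) / (1 - t1 ^ ((mu.conj r : ℤ) - i)) := by
    have hstep : ∀ j ∈ Finset.Ioc (mu.conj (r+1)) (mu.conj r),
        wval ((mu.row i : ℤ) - mu.row j + 1 + s) ((j:ℤ) - i - 1) ((j:ℤ) - i)
          = (1 - t1 ^ (((j-1 : ℕ) : ℤ) - i)) / (1 - t1 ^ ((j : ℤ) - i)) := by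
      intro j hj
      simp only [Finset.mem_Ioc] at hj
      have hj1 : 1 ≤ j := by omega
      have hub : mu.row j ≤ r := by
        by_contra hcon
        push_neg at hcon
        have h5 : j ≤ mu.conj (r+1) :=
          (Partition.le_conj_iff mu (show 1 ≤ r+1 by omega) hj1).mpr (by omega)
        omega
      have hlb : r ≤ mu.row j := (Partition.le_conj_iff mu hr1 hj1).mp hj.2
      rw [show ((mu.row i : ℤ) - mu.row j + 1 + s) = 0 by omega, wval_zero,
        show ((j:ℤ) - i - 1) = (((j-1 : ℕ)) : ℤ) - i by omega]
    rw [Finset.prod_congr rfl hstep]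
    exact telescope (fun n => 1 - t1 ^ ((n : ℤ) - i)) hm10
      (fun n h1 h2 => one_sub_t1_zpow_ne_zero (by omega))
  rw [hP1, hP2, hP3, mul_one]

lemma zpow_sum_t1 {ι : Type*} (s : Finset ι) (f : ι → ℤ) :
    t1 ^ (∑ r ∈ s, f r) = ∏ r ∈ s, t1 ^ (f r) := by
  classical
  induction s using Finset.induction with
  | empty => simp
  | @insert x s hx ih => rw [Finset.sum_insert hx, Finset.prod_insert hx, zpow_add₀ t1_ne_zero, ih]

lemma per_r_general {c' a K : ℕ} (h1 : c' ≤ a) (h2 : a ≤ K) :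
    ∏ i ∈ Finset.Ioc a K,
        ((t1⁻¹) ^ c' * ((1 - t1 ^ ((c' : ℤ) - i)) / (1 - t1 ^ ((a : ℤ) - i))))
      = t1 ^ (-((a : ℤ) * ((K : ℤ) - a))) * qbinom t1 ((K : ℤ) - c') ((K : ℤ) - a) := by
  have flip : ∀ n i : ℕ, n ≤ i →
      1 - t1 ^ ((n : ℤ) - i) = (- t1 ^ ((n : ℤ) - i)) * (1 - t1 ^ ((i - n : ℕ))) := by
    intro n i hni
    have key : t1 ^ ((n : ℤ) - i) * t1 ^ (((i - n : ℕ) : ℤ)) = 1 := by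
      rw [← zpow_add₀ t1_ne_zero, show ((n:ℤ) - i) + ((i - n : ℕ) : ℤ) = 0 by omega, zpow_zero]
    rw [← zpow_natCast t1 (i - n)] at *
    linear_combination -key
  have hfactor : ∀ i ∈ Finset.Ioc a K,
      (t1⁻¹) ^ c' * ((1 - t1 ^ ((c' : ℤ) - i)) / (1 - t1 ^ ((a : ℤ) - i)))
        = t1 ^ (-(a : ℤ)) * ((1 - t1 ^ ((i - c' : ℕ))) / (1 - t1 ^ ((i - a : ℕ)))) := by
    intro i hi
    simp only [Finset.mem_Ioc] at hi
    rw [flip c' i (by omega), flip a i (by omega), neg_mul, neg_mul, neg_div_neg_eq,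
      ← div_mul_div_comm, ← zpow_sub₀ t1_ne_zero,
      show ((c':ℤ) - i) - ((a:ℤ) - i) = (c':ℤ) - a by ring,
      inv_pow, ← zpow_natCast t1 c', ← zpow_neg, ← mul_assoc, ← zpow_add₀ t1_ne_zero,
      show -((c':ℤ)) + ((c':ℤ) - a) = -(a:ℤ) by ring]
  rw [Finset.prod_congr rfl hfactor, Finset.prod_mul_distrib, Finset.prod_const, Nat.card_Ioc,
    Finset.prod_div_distrib]
  rw [reindex_sub (fun m => 1 - t1 ^ m) h1,
    reindex_sub (fun m => 1 - t1 ^ m) (le_refl a), Nat.sub_self]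
  rw [← zpow_natCast (t1 ^ (-(a:ℤ))), ← zpow_mul,
    show (-(a:ℤ)) * ((K - a : ℕ) : ℤ) = -((a:ℤ) * ((K:ℤ) - a)) by rw [Nat.cast_sub h2]; ring]
  rw [qbinom_eq h1 h2]
  rfl

lemma per_r (lam mu : Partition) (h : mu ≤ lam) {r : ℕ} (hr : 1 ≤ r) :
    ∏ i ∈ Finset.Ioc (mu.conj r) (lam.conj r),
        ((t1⁻¹) ^ (mu.conj (r+1)) *
          ((1 - t1 ^ ((mu.conj (r+1) : ℤ) - i)) / (1 - t1 ^ ((mu.conj r : ℤ) - i))))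
      = t1 ^ (-((mu.conj r : ℤ) * ((lam.conj r : ℤ) - mu.conj r))) *
        qbinom t1 ((lam.conj r : ℤ) - mu.conj (r+1)) ((lam.conj r : ℤ) - mu.conj r) :=
  per_r_general (Partition.conj_antitone mu (by omega)) (Partition.conj_mono h hr)

lemma combinatorial (lam mu : Partition) (h : mu ≤ lam) :
    t1 ^ (lam.nstat - mu.nstat) *
      ∏ i ∈ Finset.Icc 1 lam.length, ∏ j ∈ Finset.Icc 1 lam.length,
        ∏ s ∈ Finset.range (lam.row i - mu.row i),
          wval ((mu.row i : ℤ) - mu.row j + 1 + s) ((j:ℤ) - i - 1) ((j:ℤ) - i)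
      = skHL t1 lam mu := by
  have step1 : ∀ i ∈ Finset.Icc 1 lam.length,
      (∏ j ∈ Finset.Icc 1 lam.length, ∏ s ∈ Finset.range (lam.row i - mu.row i),
        wval ((mu.row i : ℤ) - mu.row j + 1 + s) ((j:ℤ) - i - 1) ((j:ℤ) - i))
      = ∏ r ∈ Finset.Ioc (mu.row i) (lam.row i),
          ((t1⁻¹) ^ (mu.conj (r+1)) *
            ((1 - t1 ^ ((mu.conj (r+1) : ℤ) - i)) / (1 - t1 ^ ((mu.conj r : ℤ) - i)))) := by
    intro i hi
    simp only [Finset.mem_Icc] at hi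
    rw [Finset.prod_comm]
    rw [Finset.prod_congr rfl (fun s hs =>
      prod_w lam mu h hi.1 hi.2 (by simpa using hs))]
    exact reindex_row (fun r => (t1⁻¹) ^ (mu.conj (r+1)) *
      ((1 - t1 ^ ((mu.conj (r+1) : ℤ) - i)) / (1 - t1 ^ ((mu.conj r : ℤ) - i))))
      (mu.row i) (lam.row i)
  rw [Finset.prod_congr rfl step1]
  have hcomm : (∏ i ∈ Finset.Icc 1 lam.length, ∏ r ∈ Finset.Ioc (mu.row i) (lam.row i),
      ((t1⁻¹) ^ (mu.conj (r+1)) *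
        ((1 - t1 ^ ((mu.conj (r+1) : ℤ) - i)) / (1 - t1 ^ ((mu.conj r : ℤ) - i)))))
      = ∏ r ∈ Finset.Icc 1 (lam.part 0 + mu.part 0),
          ∏ i ∈ Finset.Ioc (mu.conj r) (lam.conj r),
            ((t1⁻¹) ^ (mu.conj (r+1)) *
              ((1 - t1 ^ ((mu.conj (r+1) : ℤ) - i)) / (1 - t1 ^ ((mu.conj r : ℤ) - i)))) := by
    rw [Icc_one_eq_Ioc_zero, Icc_one_eq_Ioc_zero]
    apply Finset.prod_comm'
    intro i r
    simp only [Finset.mem_Ioc]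
    constructor
    · rintro ⟨⟨hi0, hiL⟩, hmr, hrl⟩
      have hr1 : 1 ≤ r := by omega
      have h1 : i ≤ lam.conj r := (Partition.le_conj_iff lam hr1 hi0).mpr hrl
      have h2 : ¬ i ≤ mu.conj r := fun hc => by
        have := (Partition.le_conj_iff mu hr1 hi0).mp hc; omega
      have h3 : r ≤ lam.part 0 := le_trans hrl (Partition.row_le_head lam i)
      omega
    · rintro ⟨⟨hmi, hil⟩, hr0, hrN⟩
      have hi1 : 1 ≤ i := by omega
      have h1 : r ≤ lam.row i := (Partition.le_conj_iff lam hr0 hi1).mp hil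
      have h2 : ¬ r ≤ mu.row i := fun hc => by
        have := (Partition.le_conj_iff mu hr0 hi1).mpr hc; omega
      have h3 : i ≤ lam.length := le_trans hil (Partition.conj_le_length lam r)
      omega
  rw [hcomm]
  rw [Finset.prod_congr rfl (fun r hr =>
    per_r lam mu h (by simp only [Finset.mem_Icc] at hr; omega))]
  rw [Finset.prod_mul_distrib, ← zpow_sum_t1]
  have hSval : (∑ r ∈ Finset.Icc 1 (lam.part 0 + mu.part 0),
        -((mu.conj r : ℤ) * ((lam.conj r : ℤ) - mu.conj r)))
      = -(((∑ r ∈ Finset.Icc 1 (lam.part 0 + mu.part 0),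
            mu.conj r * (lam.conj r - mu.conj r)) : ℕ) : ℤ) := by
    rw [Nat.cast_sum, ← Finset.sum_neg_distrib]
    apply Finset.sum_congr rfl
    intro r hr
    simp only [Finset.mem_Icc] at hr
    rw [Nat.cast_mul, Nat.cast_sub (Partition.conj_mono h hr.1)]
  rw [hSval]
  have hid := nstat_identity lam mu h
  have hD : lam.nstat - mu.nstat
      = (∑ r ∈ Finset.Icc 1 (lam.part 0 + mu.part 0),
          mu.conj r * (lam.conj r - mu.conj r)) + nskew lam mu := by omega
  rw [hD, pow_add, skHL]
  rw [mul_mul_mul_comm, ← zpow_natCast t1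
      (∑ r ∈ Finset.Icc 1 (lam.part 0 + mu.part 0), mu.conj r * (lam.conj r - mu.conj r)),
    ← zpow_add₀ t1_ne_zero, add_neg_cancel, zpow_zero, one_mul]


lemma aq_rw (e m : ℤ) : (q2 * t2 ^ e) * q2 ^ m = q2 ^ (m + 1) * t2 ^ e := by
  rw [zpow_add₀ q2_ne_zero, zpow_one]
  ring

lemma Rij (lam mu : Partition) (h : mu ≤ lam) {i j : ℕ} (hi : 1 ≤ i) (hj : 1 ≤ j) :
    (qPochZ q2 (q2 * t2 ^ ((j : ℤ) - (i : ℤ) - 1)) ((lam.row i : ℤ) - (mu.row j : ℤ)) *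
        qPochZ q2 (q2 * t2 ^ ((j : ℤ) - (i : ℤ))) ((mu.row i : ℤ) - (mu.row j : ℤ))) /
      (qPochZ q2 (q2 * t2 ^ ((j : ℤ) - (i : ℤ) - 1)) ((mu.row i : ℤ) - (mu.row j : ℤ)) *
        qPochZ q2 (q2 * t2 ^ ((j : ℤ) - (i : ℤ))) ((lam.row i : ℤ) - (mu.row j : ℤ)))
    = (algebraMap (Polynomial F1) F2 (∏ s ∈ Finset.range (lam.row i - mu.row i),
          Pp ((mu.row i : ℤ) - mu.row j + 1 + s) ((j:ℤ) - i - 1))) /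
      (algebraMap (Polynomial F1) F2 (∏ s ∈ Finset.range (lam.row i - mu.row i),
          Pp ((mu.row i : ℤ) - mu.row j + 1 + s) ((j:ℤ) - i))) := by
  have hrow : mu.row i ≤ lam.row i := by
    rw [Partition.row, Partition.row]; exact h _
  have hA : (lam.row i : ℤ) - (mu.row j : ℤ)
      = ((mu.row i : ℤ) - (mu.row j : ℤ)) + ((lam.row i - mu.row i : ℕ) : ℤ) := by omega
  have hjlt : (mu.row i : ℤ) - (mu.row j : ℤ) < 0 → j < i := by
    intro hB
    by_contra hc
    push_neg at hc
    have := Partition.row_antitone mu hc hi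
    omega
  have hnz : ∀ e : ℤ, (((mu.row i : ℤ) - (mu.row j : ℤ)) < 0 → e ≠ 0) →
      ∀ m : ℤ, ((mu.row i : ℤ) - (mu.row j : ℤ)) ≤ m → m < 0 →
        1 - (q2 * t2 ^ e) * q2 ^ m ≠ 0 := by
    intro e he m hBm hm
    rw [aq_rw]
    apply one_sub_q2_t2_ne_zero
    rintro ⟨h1, h2⟩
    exact he (by omega) h2
  have hpos : ∀ e : ℤ, ∀ j' : ℕ, 1 - (q2 * t2 ^ e) * q2 ^ (j' : ℤ) ≠ 0 := by
    intro e j'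
    rw [aq_rw]
    apply one_sub_q2_t2_ne_zero
    rintro ⟨h1, h2⟩
    omega
  have he1 : ((mu.row i : ℤ) - (mu.row j : ℤ)) < 0 → (j:ℤ) - (i:ℤ) - 1 ≠ 0 := by
    intro hB; have := hjlt hB; omega
  have he2 : ((mu.row i : ℤ) - (mu.row j : ℤ)) < 0 → (j:ℤ) - (i:ℤ) ≠ 0 := by
    intro hB; have := hjlt hB; omega
  have hP1B : qPochZ q2 (q2 * t2 ^ ((j : ℤ) - (i : ℤ) - 1))
      ((mu.row i : ℤ) - (mu.row j : ℤ)) ≠ 0 :=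
    qPochZ_ne_zero _ _ _ (hpos _) (fun hB m hm => by
      rw [aq_rw]
      apply one_sub_q2_t2_ne_zero
      rintro ⟨h1, h2⟩
      exact he1 hB h2)
  have hP2B : qPochZ q2 (q2 * t2 ^ ((j : ℤ) - (i : ℤ)))
      ((mu.row i : ℤ) - (mu.row j : ℤ)) ≠ 0 :=
    qPochZ_ne_zero _ _ _ (hpos _) (fun hB m hm => by
      rw [aq_rw]
      apply one_sub_q2_t2_ne_zero
      rintro ⟨h1, h2⟩
      exact he2 hB h2)
  have hsplit : ∀ e : ℤ, (((mu.row i : ℤ) - (mu.row j : ℤ)) < 0 → e ≠ 0) →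
      qPochZ q2 (q2 * t2 ^ e) ((lam.row i : ℤ) - (mu.row j : ℤ))
        = qPochZ q2 (q2 * t2 ^ e) ((mu.row i : ℤ) - (mu.row j : ℤ)) *
          ∏ s ∈ Finset.range (lam.row i - mu.row i),
            (1 - q2 ^ ((mu.row i : ℤ) - mu.row j + 1 + s) * t2 ^ e) := by
    intro e he
    rw [hA, qPochZ_split _ _ _ _ q2_ne_zero (hnz e he)]
    congr 1
    apply Finset.prod_congr rfl
    intro s _
    rw [aq_rw, show ((mu.row i : ℤ) - (mu.row j : ℤ)) + (s:ℤ) + 1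
        = (mu.row i : ℤ) - mu.row j + 1 + s by ring]
  have hrhs : ∀ e : ℤ,
      algebraMap (Polynomial F1) F2 (∏ s ∈ Finset.range (lam.row i - mu.row i),
          Pp ((mu.row i : ℤ) - mu.row j + 1 + s) e)
        = (∏ s ∈ Finset.range (lam.row i - mu.row i),
            q2 ^ (-(min ((mu.row i : ℤ) - mu.row j + 1 + s) 0))) *
          ∏ s ∈ Finset.range (lam.row i - mu.row i),
            (1 - q2 ^ ((mu.row i : ℤ) - mu.row j + 1 + s) * t2 ^ e) := by
    intro e
    rw [map_prod, ← Finset.prod_mul_distrib]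
    apply Finset.prod_congr rfl
    intro s _
    rw [Pp_map]
  rw [hsplit _ he1, hsplit _ he2, hrhs, hrhs]
  have hM : (∏ s ∈ Finset.range (lam.row i - mu.row i),
      q2 ^ (-(min ((mu.row i : ℤ) - mu.row j + 1 + s) 0))) ≠ 0 :=
    Finset.prod_ne_zero_iff.mpr (fun s _ => zpow_ne_zero _ q2_ne_zero)
  rw [mul_div_mul_left _ _ hM]
  rw [show ∀ (x y u v : F2), (x * u) * y / (x * (y * v)) = (x * y) * u / ((x * y) * v) from
    fun x y u v => by ring]
  rw [mul_div_mul_left _ _ (mul_ne_zero hP1B hP2B)]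

/-- The `q = 0` specialisation of the factorised form of `ŝk`
recovers the Hall--Littlewood skew coefficient `sk`: for partitions `μ ⊆ λ`,
setting `q = 0` in
`t^{n(λ)-n(μ)} ∏_{i,j=1}^{l(λ)} ((qt^{j-i-1};q)_{λ_i-μ_j} (qt^{j-i};q)_{μ_i-μ_j})
 / ((qt^{j-i-1};q)_{μ_i-μ_j} (qt^{j-i};q)_{λ_i-μ_j})`
(a rational function of `q` over `ℚ(t)`, regular at `q = 0`) yields
`t^{n(λ/μ)} ∏_{i ≥ 1} [λ'_i - μ'_{i+1} choose λ'_i - μ'_i]_t`. -/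
theorem skHat_factorised_q_eq_zero (lam mu : Partition) (h : mu ≤ lam) :
    RatFunc.eval (RingHom.id F1) 0
      (t2 ^ (lam.nstat - mu.nstat) *
        ∏ i ∈ Finset.Icc 1 lam.length, ∏ j ∈ Finset.Icc 1 lam.length,
          (qPochZ q2 (q2 * t2 ^ ((j : ℤ) - (i : ℤ) - 1)) ((lam.row i : ℤ) - (mu.row j : ℤ)) *
              qPochZ q2 (q2 * t2 ^ ((j : ℤ) - (i : ℤ))) ((mu.row i : ℤ) - (mu.row j : ℤ))) /
            (qPochZ q2 (q2 * t2 ^ ((j : ℤ) - (i : ℤ) - 1)) ((mu.row i : ℤ) - (mu.row j : ℤ)) *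
              qPochZ q2 (q2 * t2 ^ ((j : ℤ) - (i : ℤ))) ((lam.row i : ℤ) - (mu.row j : ℤ)))) =
      skHL t1 lam mu := by
  rw [Finset.prod_congr rfl (fun i hi => Finset.prod_congr rfl (fun j hj =>
    Rij lam mu h (by simp only [Finset.mem_Icc] at hi; omega)
      (by simp only [Finset.mem_Icc] at hj; omega)))]
  rw [Finset.prod_congr rfl (fun i _ => Finset.prod_div_distrib _ _), Finset.prod_div_distrib]
  rw [Finset.prod_congr rfl (fun i _ =>
        (map_prod (algebraMap (Polynomial F1) F2) _ (Finset.Icc 1 lam.length)).symm),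
      ← map_prod,
      Finset.prod_congr rfl (fun i _ =>
        (map_prod (algebraMap (Polynomial F1) F2) _ (Finset.Icc 1 lam.length)).symm),
      ← map_prod]
  have ht2 : t2 ^ (lam.nstat - mu.nstat)
      = algebraMap (Polynomial F1) F2 (Polynomial.C (t1 ^ (lam.nstat - mu.nstat))) := by
    rw [RatFunc.algebraMap_C, show t2 = RatFunc.C t1 from rfl, map_pow]
  rw [ht2, mul_div_assoc', ← map_mul]
  have hQne : ∀ i j : ℕ, ∀ s : ℕ,
      (Pp ((mu.row i : ℤ) - mu.row j + 1 + s) ((j:ℤ) - i)).eval 0 ≠ 0 := by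
    intro i j s
    apply Pp_eval_ne_zero
    intro hc hij
    have hji : j = i := by omega
    rw [hji] at hc
    omega
  have hQeval : (∏ i ∈ Finset.Icc 1 lam.length, ∏ j ∈ Finset.Icc 1 lam.length,
      ∏ s ∈ Finset.range (lam.row i - mu.row i),
        Pp ((mu.row i : ℤ) - mu.row j + 1 + s) ((j:ℤ) - i)).eval 0
      = ∏ i ∈ Finset.Icc 1 lam.length, ∏ j ∈ Finset.Icc 1 lam.length,
          ∏ s ∈ Finset.range (lam.row i - mu.row i),
            (Pp ((mu.row i : ℤ) - mu.row j + 1 + s) ((j:ℤ) - i)).eval 0 := by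
    rw [Polynomial.eval_prod]
    apply Finset.prod_congr rfl
    intro i _
    rw [Polynomial.eval_prod]
    apply Finset.prod_congr rfl
    intro j _
    rw [Polynomial.eval_prod]
  have hQne2 : (∏ i ∈ Finset.Icc 1 lam.length, ∏ j ∈ Finset.Icc 1 lam.length,
      ∏ s ∈ Finset.range (lam.row i - mu.row i),
        Pp ((mu.row i : ℤ) - mu.row j + 1 + s) ((j:ℤ) - i)).eval 0 ≠ 0 := by
    rw [hQeval]
    exact Finset.prod_ne_zero_iff.mpr (fun i _ => Finset.prod_ne_zero_iff.mpr
      (fun j _ => Finset.prod_ne_zero_iff.mpr (fun s _ => hQne i j s)))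
  rw [eval_div_poly _ _ _ hQne2]
  rw [Polynomial.eval_mul, Polynomial.eval_C, hQeval]
  have hPeval : (∏ i ∈ Finset.Icc 1 lam.length, ∏ j ∈ Finset.Icc 1 lam.length,
      ∏ s ∈ Finset.range (lam.row i - mu.row i),
        Pp ((mu.row i : ℤ) - mu.row j + 1 + s) ((j:ℤ) - i - 1)).eval 0
      = ∏ i ∈ Finset.Icc 1 lam.length, ∏ j ∈ Finset.Icc 1 lam.length,
          ∏ s ∈ Finset.range (lam.row i - mu.row i),
            (Pp ((mu.row i : ℤ) - mu.row j + 1 + s) ((j:ℤ) - i - 1)).eval 0 := by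
    rw [Polynomial.eval_prod]
    apply Finset.prod_congr rfl
    intro i _
    rw [Polynomial.eval_prod]
    apply Finset.prod_congr rfl
    intro j _
    rw [Polynomial.eval_prod]
  rw [hPeval]
  rw [mul_div_assoc]
  rw [← Finset.prod_div_distrib,
    Finset.prod_congr rfl (fun i _ => (Finset.prod_div_distrib _ _).symm),
    Finset.prod_congr rfl (fun i _ => Finset.prod_congr rfl
      (fun j _ => (Finset.prod_div_distrib _ _).symm))]
  exact combinatorial lam mu h

end SkewPieriFormalization
end
end

section
/- q-analogue of Konvalinka–Lauve's Theorem 7: for all partitions λ, ν and every integer m ≥ 0, Σ_{μ : |λ|−|μ| = m} vs_{λ/μ}(q,t) sk_{μ/ν}(q,t) = Σ_μ sk_{μ/(1^m)}(q,t) f_{μν}^λ(q,t), where on the left the sum is over partitions μ with |μ| = |λ| − m, on the right over all partitions μ, and (1^m) denotes the column partition with m parts equal to 1. -/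
/-!
Common framework: integer partitions, Gaussian binomials, Hall--Littlewood
Pieri coefficients, the ring of symmetric functions realized as polynomials
in the power sums, the Macdonald `(q,t)`-inner product, a characterisation
of the Macdonald polynomials `P_λ(X;q,t)`, skew Macdonald polynomials,
plethystic evaluations and the various Pieri coefficients of
Konvalinka--Lauve and Warnaar.
-/

open scoped BigOperators

noncomputable section

namespace SkewPieriFormalization

noncomputable instance : DecidableEq Partition := Classical.decEq _

variable {F : Type*} [Field F]

/-! ### Auxiliary development -/

section Aux
variable {F : Type*} [Field F]

/-- the classical weight `z_d = ∏ (n+1)^{d n} (d n)!`. -/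
def zF (d : ℕ →₀ ℕ) : F := d.prod fun n m => ((n : F) + 1) ^ m * (Nat.factorial m)

/-- the Macdonald weight appearing in `innerQT`. -/
def wgt (q t : F) (d : ℕ →₀ ℕ) : F :=
  d.prod fun n m =>
    (((n : F) + 1) ^ m * (Nat.factorial m : F)) *
      ((1 - q ^ (n + 1)) / (1 - t ^ (n + 1))) ^ m

lemma innerQT_eq_sum (q t : F) (f g : Sym F) {S : Finset (ℕ →₀ ℕ)}
    (hS : f.support ⊆ S) :
    innerQT q t f g = ∑ d ∈ S, f.coeff d * g.coeff d * wgt q t d := by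
  rw [innerQT]
  refine Finset.sum_subset hS (fun d _ hd => ?_)
  rw [MvPolynomial.notMem_support_iff] at hd
  simp [hd]

lemma innerQT_comm (q t : F) (f g : Sym F) : innerQT q t f g = innerQT q t g f := by
  rw [innerQT_eq_sum q t f g (S := f.support ∪ g.support) Finset.subset_union_left,
    innerQT_eq_sum q t g f (S := f.support ∪ g.support) Finset.subset_union_right]
  exact Finset.sum_congr rfl fun d _ => by ring

lemma innerQT_add_right (q t : F) (f g h : Sym F) :
    innerQT q t f (g + h) = innerQT q t f g + innerQT q t f h := by
  rw [innerQT_eq_sum q t f (g + h) (le_refl _), innerQT_eq_sum q t f g (le_refl _),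
    innerQT_eq_sum q t f h (le_refl _), ← Finset.sum_add_distrib]
  exact Finset.sum_congr rfl fun d _ => by rw [MvPolynomial.coeff_add]; ring

lemma innerQT_smul_right (q t c : F) (f g : Sym F) :
    innerQT q t f (c • g) = c * innerQT q t f g := by
  rw [innerQT_eq_sum q t f _ (le_refl _), innerQT_eq_sum q t f g (le_refl _),
    Finset.mul_sum]
  refine Finset.sum_congr rfl fun d _ => by rw [MvPolynomial.coeff_smul, smul_eq_mul]; ring

lemma innerQT_sum_right {ι : Type*} (q t : F) (f : Sym F) (s : Finset ι) (g : ι → Sym F) :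
    innerQT q t f (∑ i ∈ s, g i) = ∑ i ∈ s, innerQT q t f (g i) := by
  classical
  induction s using Finset.induction with
  | empty => simp [innerQT]
  | insert _ _ h ih =>
      rw [Finset.sum_insert h, Finset.sum_insert h, innerQT_add_right, ih]

lemma innerQT_add_left (q t : F) (f g h : Sym F) :
    innerQT q t (f + g) h = innerQT q t f h + innerQT q t g h := by
  rw [innerQT_comm, innerQT_add_right, innerQT_comm q t h f, innerQT_comm q t h g]

lemma innerQT_smul_left (q t c : F) (f g : Sym F) :
    innerQT q t (c • f) g = c * innerQT q t f g := by
  rw [innerQT_comm, innerQT_smul_right, innerQT_comm]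

lemma innerQT_sum_left {ι : Type*} (q t : F) (s : Finset ι) (g : ι → Sym F) (f : Sym F) :
    innerQT q t (∑ i ∈ s, g i) f = ∑ i ∈ s, innerQT q t (g i) f := by
  rw [innerQT_comm, innerQT_sum_right]
  exact Finset.sum_congr rfl fun i _ => innerQT_comm ..

lemma innerQT_monomial_right (q t : F) (f : Sym F) (d : ℕ →₀ ℕ) :
    innerQT q t f (MvPolynomial.monomial d 1) = f.coeff d * wgt q t d := by
  classical
  rw [innerQT_eq_sum q t f _ (S := f.support ∪ {d}) Finset.subset_union_left]
  rw [Finset.sum_eq_single d]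
  · simp [MvPolynomial.coeff_monomial]
  · intro e _ he
    simp [MvPolynomial.coeff_monomial, Ne.symm he]
  · intro hd
    simp at hd

end Aux


section Dict

variable {F : Type*} [Field F]

open Finset MvPolynomial

lemma Partition.ext' {a b : Partition} (h : a.part = b.part) : a = b := by
  cases a; cases b; simpa using h

/-- a down-closed finite set of naturals is an initial segment. -/
lemma downclosed_mem_iff {S : Finset ℕ} (h : ∀ a b : ℕ, a ≤ b → b ∈ S → a ∈ S)
    (j : ℕ) : j ∈ S ↔ j < S.card := by
  constructor
  · intro hj
    have hsub : Finset.range (j + 1) ⊆ S := by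
      intro a ha
      simp only [Finset.mem_range] at ha
      exact h a j (by omega) hj
    have := Finset.card_le_card hsub
    simp only [Finset.card_range] at this
    omega
  · intro hj
    by_contra hc
    have hsub : S ⊆ Finset.range j := by
      intro a ha
      simp only [Finset.mem_range]
      by_contra hle
      push_neg at hle
      exact hc (h j a hle ha)
    have := Finset.card_le_card hsub
    simp at this
    omega

/-- the multiplicity monomial of a partition: `(mon κ) n = m_{n+1}(κ)`. -/
def mon (k : Partition) : ℕ →₀ ℕ :=
  ∑ j ∈ k.part.support, Finsupp.single (k.part j - 1) 1

/-- the number of parts of weight vector `d` that are `≥ r`. -/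
def cnt (d : ℕ →₀ ℕ) (r : ℕ) : ℕ := ∑ n ∈ d.support, if r ≤ n + 1 then d n else 0

/-- total number of parts. -/
def len (d : ℕ →₀ ℕ) : ℕ := d.sum fun _ m => m

lemma cnt_anti (d : ℕ →₀ ℕ) {r r' : ℕ} (h : r ≤ r') : cnt d r' ≤ cnt d r := by
  refine Finset.sum_le_sum fun n _ => ?_
  split <;> split <;> omega

lemma cnt_le_len (d : ℕ →₀ ℕ) (r : ℕ) : cnt d r ≤ len d := by
  refine Finset.sum_le_sum fun n _ => ?_
  dsimp only
  split <;> omega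

lemma cnt_succ (d : ℕ →₀ ℕ) (r : ℕ) (hr : 1 ≤ r) :
    cnt d r = d (r - 1) + cnt d (r + 1) := by
  classical
  have hsplit : ∀ n ∈ d.support,
      (if r ≤ n + 1 then d n else 0)
        = (if n = r - 1 then d n else 0) + (if r + 1 ≤ n + 1 then d n else 0) := by
    intro n _
    split_ifs <;> omega
  rw [cnt, Finset.sum_congr rfl hsplit, Finset.sum_add_distrib]
  congr 1
  · rw [Finset.sum_ite_eq' d.support (r-1) d]
    split
    · rfl
    · next h => exact (Finsupp.notMem_support_iff.mp h).symm

lemma cnt_eq_zero (d : ℕ →₀ ℕ) {r : ℕ} (h : ∀ n ∈ d.support, n + 1 < r) :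
    cnt d r = 0 := by
  refine Finset.sum_eq_zero fun n hn => ?_
  have := h n hn
  split <;> omega

/-- the partition associated with a multiplicity vector. -/
def toPart (d : ℕ →₀ ℕ) : Partition where
  part := Finsupp.onFinset (Finset.range (cnt d 1))
    (fun j => ((Finset.range (d.support.sup id + 1)).filter fun i => j < cnt d (i + 1)).card)
    (by
      intro j h
      simp only [Finset.mem_range]
      by_contra hc
      push_neg at hc
      apply h
      have hemp : ((Finset.range (d.support.sup id + 1)).filter
          fun i => j < cnt d (i + 1)) = ∅ := by
        refine Finset.filter_eq_empty_iff.mpr fun i _ => ?_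
        push_neg
        calc cnt d (i+1) ≤ cnt d 1 := cnt_anti d (by omega)
          _ ≤ j := hc
      simp only [hemp, Finset.card_empty])
  antitone' := by
    intro i j hij
    simp only [Finsupp.onFinset_apply]
    refine Finset.card_le_card (Finset.monotone_filter_right _ ?_)
    intro a ha
    omega

lemma toPart_part_ge (d : ℕ →₀ ℕ) {r : ℕ} (hr : 1 ≤ r) (j : ℕ) :
    r ≤ (toPart d).part j ↔ j < cnt d r := by
  set B := d.support.sup id + 1 with hB
  have hpart : (toPart d).part j
      = ((Finset.range B).filter fun i => j < cnt d (i + 1)).card := rfl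
  have hdc : ∀ a b : ℕ, a ≤ b → b ∈ (Finset.range B).filter (fun i => j < cnt d (i + 1)) →
      a ∈ (Finset.range B).filter (fun i => j < cnt d (i + 1)) := by
    intro a b hab hb
    simp only [Finset.mem_filter, Finset.mem_range] at hb ⊢
    exact ⟨by omega, lt_of_lt_of_le hb.2 (cnt_anti d (by omega))⟩
  have hiff := downclosed_mem_iff hdc
  constructor
  · intro h
    have : r - 1 ∈ (Finset.range B).filter fun i => j < cnt d (i + 1) := by
      rw [hiff]
      omega
    simp only [Finset.mem_filter] at this
    have := this.2
    rwa [show r - 1 + 1 = r by omega] at this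
  · intro h
    have hrB : r - 1 < B := by
      by_contra hc
      push_neg at hc
      have : cnt d r = 0 := cnt_eq_zero d fun n hn => by
        have : n ≤ d.support.sup id := Finset.le_sup (f := id) hn
        omega
      omega
    have : r - 1 ∈ (Finset.range B).filter fun i => j < cnt d (i + 1) := by
      simp only [Finset.mem_filter, Finset.mem_range]
      rw [show r - 1 + 1 = r by omega]
      exact ⟨hrB, h⟩
    rw [hiff] at this
    omega

lemma part_ge_iff (k : Partition) {r : ℕ} (hr : 1 ≤ r) (j : ℕ) :
    r ≤ k.part j ↔ j < (k.part.support.filter fun i => r ≤ k.part i).card := by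
  have hdc : ∀ a b : ℕ, a ≤ b → b ∈ k.part.support.filter (fun i => r ≤ k.part i) →
      a ∈ k.part.support.filter (fun i => r ≤ k.part i) := by
    intro a b hab hb
    simp only [Finset.mem_filter, Finsupp.mem_support_iff] at hb ⊢
    have := k.antitone' hab
    constructor
    · omega
    · omega
  have hiff := downclosed_mem_iff hdc
  rw [← hiff]
  simp only [Finset.mem_filter, Finsupp.mem_support_iff]
  constructor
  · intro h; exact ⟨by omega, h⟩
  · intro h; exact h.2

lemma mon_apply (k : Partition) (n : ℕ) :
    mon k n = (k.part.support.filter fun j => k.part j = n + 1).card := by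
  classical
  rw [mon, Finsupp.finset_sum_apply]
  rw [Finset.card_filter]
  refine Finset.sum_congr rfl fun j hj => ?_
  have hj1 : 1 ≤ k.part j := by
    rw [Finsupp.mem_support_iff] at hj; omega
  simp only [Finsupp.single_apply]
  split <;> split <;> first | rfl | omega

lemma cnt_mon (k : Partition) {r : ℕ} (hr : 1 ≤ r) :
    cnt (mon k) r = (k.part.support.filter fun i => r ≤ k.part i).card := by
  classical
  have hmaps : ∀ j ∈ k.part.support.filter (fun i => r ≤ k.part i),
      k.part j - 1 ∈ (mon k).support.filter fun n => r ≤ n + 1 := by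
    intro j hj
    simp only [Finset.mem_filter, Finsupp.mem_support_iff] at hj ⊢
    constructor
    · rw [mon_apply]
      rw [show k.part j - 1 + 1 = k.part j by omega]
      have : j ∈ k.part.support.filter fun i => k.part i = k.part j :=
        Finset.mem_filter.mpr ⟨Finsupp.mem_support_iff.mpr hj.1, rfl⟩
      intro hc
      rw [Finset.card_eq_zero] at hc
      rw [hc] at this
      simp at this
    · omega
  rw [Finset.card_eq_sum_card_fiberwise hmaps]
  rw [cnt, ← Finset.sum_filter]
  refine Finset.sum_congr rfl fun n hn => ?_
  simp only [Finset.mem_filter] at hn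
  rw [mon_apply]
  congr 1
  have hn2 : r ≤ n + 1 := hn.2
  ext j
  simp only [Finset.mem_filter, Finsupp.mem_support_iff, Finset.filter_filter]
  omega

lemma toPart_mon (k : Partition) : toPart (mon k) = k := by
  refine Partition.ext' (Finsupp.ext fun j => ?_)
  have key : ∀ r : ℕ, 1 ≤ r → (r ≤ (toPart (mon k)).part j ↔ r ≤ k.part j) := by
    intro r hr
    rw [toPart_part_ge _ hr, cnt_mon _ hr, part_ge_iff _ hr]
  have h1 := key ((toPart (mon k)).part j)
  have h2 := key (k.part j)
  by_cases hz : (toPart (mon k)).part j = 0 <;> by_cases hz2 : k.part j = 0 <;> omega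

lemma mon_toPart (d : ℕ →₀ ℕ) : mon (toPart d) = d := by
  refine Finsupp.ext fun n => ?_
  rw [mon_apply]
  have hfe : (toPart d).part.support.filter (fun j => (toPart d).part j = n + 1)
      = Finset.range (cnt d (n+1)) \ Finset.range (cnt d (n+2)) := by
    ext j
    simp only [Finset.mem_filter, Finsupp.mem_support_iff, Finset.mem_sdiff, Finset.mem_range]
    have h1 := toPart_part_ge d (r := n+1) (by omega) j
    have h2 := toPart_part_ge d (r := n+2) (by omega) j
    omega
  rw [hfe, Finset.card_sdiff_of_subset (Finset.range_subset_range.mpr (cnt_anti d (by omega)))]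
  simp only [Finset.card_range]
  have := cnt_succ d (n+1) (by omega)
  simp only [show n + 1 - 1 = n by omega, show n + 1 + 1 = n + 2 from rfl] at this
  omega

lemma mon_injective : Function.Injective mon := by
  intro a b h
  rw [← toPart_mon a, ← toPart_mon b, h]

lemma toPart_injective : Function.Injective toPart := by
  intro a b h
  rw [← mon_toPart a, ← mon_toPart b, h]

end Dict


section Expand

variable {F : Type*} [Field F]

open Finset MvPolynomial

lemma wt_single (a m : ℕ) : wt (Finsupp.single a m) = (a + 1) * m :=
  Finsupp.sum_single_index (by simp)

lemma wt_sum {ι : Type*} (s : Finset ι) (f : ι → (ℕ →₀ ℕ)) :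
    wt (∑ i ∈ s, f i) = ∑ i ∈ s, wt (f i) := by
  classical
  induction s using Finset.induction with
  | empty => simp [wt]
  | insert _ _ h ih =>
      rw [Finset.sum_insert h, Finset.sum_insert h, ← ih]
      exact Finsupp.sum_add_index' (fun n => by simp) (fun n m1 m2 => by ring)

lemma wt_mon (k : Partition) : wt (mon k) = k.size := by
  rw [mon, wt_sum, Partition.size, Finsupp.sum]
  refine Finset.sum_congr rfl fun j hj => ?_
  rw [Finsupp.mem_support_iff] at hj
  rw [wt_single]
  omega

lemma size_toPart (d : ℕ →₀ ℕ) : (toPart d).size = wt d := by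
  rw [← wt_mon, mon_toPart]

lemma prod_X_eq {ι : Type*} (s : Finset ι) (f : ι → ℕ) :
    (∏ j ∈ s, (X (f j) : Sym F)) =
      monomial (∑ j ∈ s, Finsupp.single (f j) 1) (1 : F) := by
  classical
  induction s using Finset.induction with
  | empty => simp
  | insert _ _ h ih =>
      rw [Finset.prod_insert h, Finset.sum_insert h, ih, X, monomial_mul, one_mul]

lemma pprod_eq_monomial (k : Partition) :
    (pprod k : Sym F) = monomial (mon k) (1 : F) := by
  rw [pprod, prod_X_eq, mon]

lemma mon_supp_subset (k : Partition) :
    (mon k).support ⊆ Finset.range (k.part 0) := by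
  intro n hn
  rw [Finsupp.mem_support_iff, mon_apply] at hn
  have hne : (k.part.support.filter fun j => k.part j = n + 1).Nonempty := by
    rw [← Finset.card_pos]
    omega
  obtain ⟨j, hj⟩ := hne
  simp only [Finset.mem_filter] at hj
  have := k.antitone' (Nat.zero_le j)
  simp only [Finset.mem_range]
  omega

lemma zF_eq_prod {d : ℕ →₀ ℕ} {S : Finset ℕ} (hS : d.support ⊆ S) :
    (zF d : F) = ∏ n ∈ S, (((n : F) + 1) ^ (d n) * (Nat.factorial (d n) : F)) :=
  Finsupp.prod_of_support_subset d hS _ (fun i _ => by simp)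

lemma zee_cast (k : Partition) : ((k.zee : F)) = zF (mon k) := by
  rw [zF_eq_prod (mon_supp_subset k), Partition.zee]
  have hIcc : Finset.Icc 1 (k.part 0)
      = (Finset.range (k.part 0)).map ⟨(· + 1), add_left_injective 1⟩ := by
    ext a
    simp only [Finset.mem_Icc, Finset.mem_map, Finset.mem_range, Function.Embedding.coeFn_mk]
    constructor
    · intro h; exact ⟨a - 1, by omega, by omega⟩
    · rintro ⟨b, hb, rfl⟩; omega
  rw [hIcc, Finset.prod_map, Nat.cast_prod]
  refine Finset.prod_congr rfl fun n _ => ?_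
  simp only [Function.Embedding.coeFn_mk]
  have hm : k.mult (n + 1) = mon k n := (mon_apply k n).symm
  rw [Nat.cast_mul, Nat.cast_pow, hm]
  push_cast
  ring

lemma length_eq_len (k : Partition) : k.length = len (mon k) := by
  classical
  have hmaps : ∀ j ∈ k.part.support, k.part j - 1 ∈ (mon k).support := by
    intro j hj
    rw [Finsupp.mem_support_iff, mon_apply]
    have hj1 : 1 ≤ k.part j := by rw [Finsupp.mem_support_iff] at hj; omega
    have : j ∈ k.part.support.filter fun i => k.part i = k.part j - 1 + 1 :=
      Finset.mem_filter.mpr ⟨hj, by omega⟩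
    intro hc
    rw [Finset.card_eq_zero] at hc
    rw [hc] at this
    simp at this
  rw [Partition.length, Finset.card_eq_sum_card_fiberwise hmaps, len, Finsupp.sum]
  refine Finset.sum_congr rfl fun n hn => ?_
  rw [mon_apply]
  congr 1
  ext j
  simp only [Finset.mem_filter, Finsupp.mem_support_iff]
  omega

lemma len_toPart (d : ℕ →₀ ℕ) : (toPart d).length = len d := by
  rw [length_eq_len, mon_toPart]

/-- a common upper bound for the weight-`r` exponent vectors. -/
def bigD (r : ℕ) : ℕ →₀ ℕ :=
  Finsupp.onFinset (Finset.range r) (fun n => if n < r then r else 0)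
    (fun n h => by
      simp only [Finset.mem_range]
      by_contra hc
      simp [hc] at h)

/-- the finset of exponent vectors of weight `r`. -/
def Md (r : ℕ) : Finset (ℕ →₀ ℕ) := (Finset.Iic (bigD r)).filter fun d => wt d = r

lemma single_le_wt (d : ℕ →₀ ℕ) (n : ℕ) : (n + 1) * d n ≤ wt d := by
  by_cases h : d n = 0
  · simp [h]
  · have hmem := Finsupp.mem_support_iff.mpr h
    have := Finset.single_le_sum (f := fun i => (i + 1) * d i)
      (fun i _ => Nat.zero_le _) hmem
    simpa [wt, Finsupp.sum] using this

lemma mem_Md {d : ℕ →₀ ℕ} {r : ℕ} : d ∈ Md r ↔ wt d = r := by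
  constructor
  · intro h; exact (Finset.mem_filter.mp h).2
  · intro h
    refine Finset.mem_filter.mpr ⟨Finset.mem_Iic.mpr ?_, h⟩
    rw [Finsupp.le_def]
    intro n
    by_cases hn : d n = 0
    · simp [hn]
    · have h1 := single_le_wt d n
      have h2 : n + 1 ≤ (n + 1) * d n := Nat.le_mul_of_pos_right _ (by omega)
      have h3 : d n ≤ (n + 1) * d n := Nat.le_mul_of_pos_left _ (by omega)
      have hlt : n < r := by omega
      have hb : (bigD r) n = r := by
        simp only [bigD, Finsupp.onFinset_apply, if_pos hlt]
      omega

/-- the finset of partitions of `r`. -/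
def Pn (r : ℕ) : Finset Partition := (Md r).image toPart

lemma mem_Pn {k : Partition} {r : ℕ} : k ∈ Pn r ↔ k.size = r := by
  constructor
  · intro h
    obtain ⟨d, hd, rfl⟩ := Finset.mem_image.mp h
    rw [size_toPart]
    exact mem_Md.mp hd
  · intro h
    refine Finset.mem_image.mpr ⟨mon k, mem_Md.mpr ?_, toPart_mon k⟩
    rw [wt_mon, h]

lemma sum_Pn {M : Type*} [AddCommMonoid M] (r : ℕ) (g : Partition → M) :
    ∑ k ∈ Pn r, g k = ∑ d ∈ Md r, g (toPart d) :=
  Finset.sum_image fun a _ b _ h => toPart_injective h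

lemma finsum_size {M : Type*} [AddCommMonoid M] (r : ℕ) (g : Partition → M) :
    (∑ᶠ (k : Partition) (_ : k.size = r), g k) = ∑ k ∈ Pn r, g k :=
  finsum_cond_eq_sum_of_cond_iff g (fun {k} _ => mem_Pn.symm)

lemma hsym_eq (r : ℕ) :
    hsym F r = ∑ d ∈ Md r, (zF d : F)⁻¹ • (monomial d (1 : F)) := by
  rw [hsym, finsum_size, sum_Pn]
  refine Finset.sum_congr rfl fun d _ => ?_
  rw [zee_cast, mon_toPart, pprod_eq_monomial, mon_toPart]

lemma esym_eq (r : ℕ) :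
    esym F r = ∑ d ∈ Md r,
      ((-1 : F) ^ (r - len d) * (zF d : F)⁻¹) • (monomial d (1 : F)) := by
  rw [esym, finsum_size, sum_Pn]
  refine Finset.sum_congr rfl fun d _ => ?_
  rw [zee_cast, mon_toPart, pprod_eq_monomial, mon_toPart, len_toPart]

lemma coeff_hsym (r : ℕ) (e : ℕ →₀ ℕ) :
    (hsym F r).coeff e = if wt e = r then (zF e : F)⁻¹ else 0 := by
  classical
  rw [hsym_eq]
  rw [show ((∑ d ∈ Md r, (zF d : F)⁻¹ • (monomial d (1 : F))).coeff e)
      = ∑ d ∈ Md r, ((zF d : F)⁻¹ • (monomial d (1 : F))).coeff e from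
    MvPolynomial.coeff_sum _ _ _]
  by_cases hw : wt e = r
  · rw [if_pos hw, Finset.sum_eq_single e]
    · rw [MvPolynomial.coeff_smul, MvPolynomial.coeff_monomial, if_pos rfl, smul_eq_mul, mul_one]
    · intro d _ hd
      rw [MvPolynomial.coeff_smul, MvPolynomial.coeff_monomial, if_neg hd, smul_eq_mul, mul_zero]
    · intro he
      exact absurd (mem_Md.mpr hw) he
  · rw [if_neg hw]
    refine Finset.sum_eq_zero fun d hd => ?_
    have : d ≠ e := fun h => hw (h ▸ mem_Md.mp hd)
    rw [MvPolynomial.coeff_smul, MvPolynomial.coeff_monomial, if_neg this, smul_eq_mul, mul_zero]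

lemma coeff_esym (r : ℕ) (e : ℕ →₀ ℕ) :
    (esym F r).coeff e
      = if wt e = r then (-1 : F) ^ (r - len e) * (zF e : F)⁻¹ else 0 := by
  classical
  rw [esym_eq]
  rw [show ((∑ d ∈ Md r, ((-1 : F) ^ (r - len d) * (zF d : F)⁻¹) • (monomial d (1 : F))).coeff e)
      = ∑ d ∈ Md r, (((-1 : F) ^ (r - len d) * (zF d : F)⁻¹) • (monomial d (1 : F))).coeff e from
    MvPolynomial.coeff_sum _ _ _]
  by_cases hw : wt e = r
  · rw [if_pos hw, Finset.sum_eq_single e]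
    · rw [MvPolynomial.coeff_smul, MvPolynomial.coeff_monomial, if_pos rfl, smul_eq_mul, mul_one]
    · intro d _ hd
      rw [MvPolynomial.coeff_smul, MvPolynomial.coeff_monomial, if_neg hd, smul_eq_mul, mul_zero]
    · intro he
      exact absurd (mem_Md.mpr hw) he
  · rw [if_neg hw]
    refine Finset.sum_eq_zero fun d hd => ?_
    have : d ≠ e := fun h => hw (h ▸ mem_Md.mp hd)
    rw [MvPolynomial.coeff_smul, MvPolynomial.coeff_monomial, if_neg this, smul_eq_mul, mul_zero]

end Expand


section Newton

variable {F : Type*} [Field F]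

open Finset MvPolynomial

lemma zF_ne_zero [CharZero F] (d : ℕ →₀ ℕ) : (zF d : F) ≠ 0 := by
  rw [zF, Finsupp.prod]
  refine Finset.prod_ne_zero_iff.mpr fun n _ => ?_
  apply mul_ne_zero
  · apply pow_ne_zero
    have h2 : ((n : F) + 1) = ((n + 1 : ℕ) : F) := by push_cast; ring
    rw [h2]
    exact Nat.cast_ne_zero.mpr (Nat.succ_ne_zero n)
  · exact Nat.cast_ne_zero.mpr (Nat.factorial_ne_zero _)

lemma sub_single_add (e : ℕ →₀ ℕ) (j : ℕ) (h : 1 ≤ e j) :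
    (e - Finsupp.single j 1) + Finsupp.single j 1 = e := by
  ext n
  simp only [Finsupp.add_apply, Finsupp.tsub_apply, Finsupp.single_apply]
  by_cases hn : j = n
  · subst hn
    simp
    omega
  · simp only [if_neg hn]
    omega

lemma wt_sub_single (e : ℕ →₀ ℕ) (j : ℕ) (h : 1 ≤ e j) :
    wt (e - Finsupp.single j 1) + (j + 1) = wt e := by
  conv_rhs => rw [← sub_single_add e j h]
  rw [show wt ((e - Finsupp.single j 1) + Finsupp.single j 1)
      = wt (e - Finsupp.single j 1) + wt (Finsupp.single j 1) from
    Finsupp.sum_add_index' (fun n => by simp) (fun n m1 m2 => by ring), wt_single]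
  ring

lemma zF_add_single (e : ℕ →₀ ℕ) (j : ℕ) :
    (zF (e + Finsupp.single j 1) : F) = zF e * (((j : F) + 1) * ((e j : ℕ) + 1 : F)) := by
  classical
  set e' := e + Finsupp.single j 1 with he'
  have happ : ∀ n, e' n = e n + (if j = n then 1 else 0) := by
    intro n; rw [he', Finsupp.add_apply, Finsupp.single_apply]
  set S := e.support ∪ {j} with hS
  have h1 : e.support ⊆ S := Finset.subset_union_left
  have h2 : e'.support ⊆ S :=
    (Finsupp.support_add).trans
      (Finset.union_subset_union (le_refl _) Finsupp.support_single_subset)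
  have hjS : j ∈ S := Finset.mem_union_right _ (Finset.mem_singleton_self j)
  rw [zF_eq_prod (F := F) h1, zF_eq_prod (F := F) h2]
  rw [← Finset.prod_erase_mul S _ hjS, ← Finset.prod_erase_mul S _ hjS]
  have hterm : ∀ n ∈ S.erase j,
      ((n : F) + 1) ^ (e' n) * (Nat.factorial (e' n) : F)
        = ((n : F) + 1) ^ (e n) * (Nat.factorial (e n) : F) := by
    intro n hn
    have hne : n ≠ j := Finset.ne_of_mem_erase hn
    rw [happ n, if_neg (Ne.symm hne), add_zero]
  rw [Finset.prod_congr rfl hterm]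
  have hj : e' j = e j + 1 := by rw [happ j, if_pos rfl]
  rw [hj, pow_succ, Nat.factorial_succ]
  push_cast
  ring

lemma zF_sub_single (e : ℕ →₀ ℕ) (j : ℕ) (h : 1 ≤ e j) :
    (zF e : F) = zF (e - Finsupp.single j 1) * (((j : F) + 1) * (e j : F)) := by
  conv_lhs => rw [← sub_single_add e j h]
  rw [zF_add_single]
  congr 2
  have h2 : ((e - Finsupp.single j 1) : ℕ →₀ ℕ) j = e j - 1 := by
    rw [Finsupp.tsub_apply, Finsupp.single_apply, if_pos rfl]
  rw [h2]
  have h3 : (e j - 1) + 1 = e j := by omega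
  exact_mod_cast congrArg (Nat.cast (R := F)) h3

lemma supp_mem_lt (e : ℕ →₀ ℕ) {j : ℕ} (hj : j ∈ e.support) : j + 1 ≤ wt e := by
  have h1 := single_le_wt e j
  have h2 : 1 ≤ e j := by rwa [Finsupp.mem_support_iff, ← Nat.pos_iff_ne_zero] at hj
  have h3 : j + 1 ≤ (j + 1) * e j := Nat.le_mul_of_pos_right _ (by omega)
  omega

/-- Newton's identity `n h_n = ∑_{i=1}^n p_i h_{n-i}`. -/
lemma newton [CharZero F] (n : ℕ) :
    (n : F) • hsym F n = ∑ j ∈ Finset.range n, (X j : Sym F) * hsym F (n - 1 - j) := by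
  classical
  apply MvPolynomial.ext
  intro e
  rw [MvPolynomial.coeff_smul, smul_eq_mul, MvPolynomial.coeff_sum]
  have hterm : ∀ j ∈ Finset.range n,
      (X j * hsym F (n - 1 - j)).coeff e
        = if j ∈ e.support then
            (if wt (e - Finsupp.single j 1) = n - 1 - j
              then (zF (e - Finsupp.single j 1) : F)⁻¹ else 0)
          else 0 := by
    intro j _
    rw [MvPolynomial.coeff_X_mul' e j, coeff_hsym]
  rw [Finset.sum_congr rfl hterm, coeff_hsym]
  by_cases hw : wt e = n
  · rw [if_pos hw]
    have hsub : e.support ⊆ Finset.range n := by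
      intro j hj
      have := supp_mem_lt e hj
      simp only [Finset.mem_range]; omega
    rw [← Finset.sum_filter, Finset.filter_mem_eq_inter,
      Finset.inter_eq_right.mpr hsub]
    have hterm2 : ∀ j ∈ e.support,
        (if wt (e - Finsupp.single j 1) = n - 1 - j
          then (zF (e - Finsupp.single j 1) : F)⁻¹ else 0)
          = ((j : F) + 1) * (e j : F) * (zF e : F)⁻¹ := by
      intro j hj
      have hej : 1 ≤ e j := by rwa [Finsupp.mem_support_iff, ← Nat.pos_iff_ne_zero] at hj
      have hwt := wt_sub_single e j hej
      have hjn := supp_mem_lt e hj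
      rw [if_pos (by omega)]
      rw [zF_sub_single e j hej (F := F), mul_inv]
      have hz : (zF (e - Finsupp.single j 1) : F) ≠ 0 := zF_ne_zero _
      have hjj1 : ((j : F) + 1) ≠ 0 := by
        have h2 : ((j : F) + 1) = ((j + 1 : ℕ) : F) := by push_cast; ring
        rw [h2]; exact Nat.cast_ne_zero.mpr (Nat.succ_ne_zero j)
      have hjj2 : ((e j : ℕ) : F) ≠ 0 := Nat.cast_ne_zero.mpr (by omega)
      field_simp
    rw [Finset.sum_congr rfl hterm2, ← Finset.sum_mul]
    congr 1
    have : ∀ j ∈ e.support, ((j : F) + 1) * (e j : F) = (((j + 1) * e j : ℕ) : F) := by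
      intro j _; push_cast; ring
    rw [Finset.sum_congr rfl this, ← Nat.cast_sum]
    congr 1
    rw [← hw, wt, Finsupp.sum]
  · rw [if_neg hw, mul_zero]
    refine (Finset.sum_eq_zero fun j hj => ?_).symm
    simp only [Finset.mem_range] at hj
    by_cases hjs : j ∈ e.support
    · rw [if_pos hjs]
      have hej : 1 ≤ e j := by rwa [Finsupp.mem_support_iff, ← Nat.pos_iff_ne_zero] at hjs
      have hwt := wt_sub_single e j hej
      rw [if_neg (by omega)]
    · rw [if_neg hjs]

lemma hsym_zero : hsym F 0 = 1 := by
  rw [hsym_eq]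
  have hMd : Md 0 = {0} := by
    ext d
    rw [mem_Md, Finset.mem_singleton]
    constructor
    · intro h
      ext n
      have h1 := single_le_wt d n
      simp only [Finsupp.coe_zero, Pi.zero_apply]
      by_contra hc
      have : n + 1 ≤ (n + 1) * d n := Nat.le_mul_of_pos_right _ (by omega)
      omega
    · rintro rfl
      simp [wt, Finsupp.sum]
  rw [hMd, Finset.sum_singleton]
  have : zF (0 : ℕ →₀ ℕ) = (1 : F) := by simp [zF, Finsupp.prod]
  rw [this, inv_one, one_smul]
  simp [MvPolynomial.monomial_eq]

end Newton

section Hom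

variable {F : Type*} [Field F]

open Finset MvPolynomial

/-- homogeneity of weighted degree `n` (power-sum grading). -/
def Hom (n : ℕ) (f : Sym F) : Prop := ∀ d : ℕ →₀ ℕ, f.coeff d ≠ 0 → wt d = n

lemma Hom.add {n : ℕ} {f g : Sym F} (hf : Hom n f) (hg : Hom n g) : Hom n (f + g) := by
  intro d hd
  rw [MvPolynomial.coeff_add] at hd
  by_cases h : f.coeff d ≠ 0
  · exact hf d h
  · push_neg at h
    exact hg d (by rwa [h, zero_add] at hd)

lemma Hom.smul {n : ℕ} {c : F} {f : Sym F} (hf : Hom n f) : Hom n (c • f) := by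
  intro d hd
  rw [MvPolynomial.coeff_smul] at hd
  exact hf d fun h => hd (by rw [h, smul_zero])

lemma Hom.zero {n : ℕ} : Hom n (0 : Sym F) := by
  intro d hd
  simp at hd

lemma Hom.sum {ι : Type*} {n : ℕ} (s : Finset ι) (f : ι → Sym F)
    (hf : ∀ i ∈ s, Hom n (f i)) : Hom n (∑ i ∈ s, f i) := by
  classical
  induction s using Finset.induction with
  | empty => simpa using Hom.zero
  | insert _ _ h ih =>
      next a s' =>
        rw [Finset.sum_insert h]
        exact (hf a (Finset.mem_insert_self a s')).add
          (ih fun i hi => hf i (Finset.mem_insert_of_mem hi))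

lemma Hom.mul {n m : ℕ} {f g : Sym F} (hf : Hom n f) (hg : Hom m g) : Hom (n + m) (f * g) := by
  classical
  intro d hd
  rw [MvPolynomial.coeff_mul] at hd
  obtain ⟨p, hp, hne⟩ := Finset.exists_ne_zero_of_sum_ne_zero hd
  rw [Finset.HasAntidiagonal.mem_antidiagonal] at hp
  have h1 : f.coeff p.1 ≠ 0 := fun h => hne (by rw [h, zero_mul])
  have h2 : g.coeff p.2 ≠ 0 := fun h => hne (by rw [h, mul_zero])
  have := hf _ h1
  have := hg _ h2
  rw [← hp, show wt (p.1 + p.2) = wt p.1 + wt p.2 from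
    Finsupp.sum_add_index' (fun n => by simp) (fun n m1 m2 => by ring)]
  omega

lemma Hom.monomial (d : ℕ →₀ ℕ) (c : F) : Hom (wt d) (MvPolynomial.monomial d c) := by
  intro e he
  rw [MvPolynomial.coeff_monomial] at he
  split at he
  · next h => rw [h]
  · simp at he

lemma Hom.hsym (r : ℕ) : Hom r (hsym F r) := by
  intro d hd
  rw [coeff_hsym] at hd
  split at hd
  · assumption
  · simp at hd

lemma Hom.esym (r : ℕ) : Hom r (esym F r) := by
  intro d hd
  rw [coeff_esym] at hd
  split at hd
  · assumption
  · simp at hd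

lemma Hom.one : Hom 0 (1 : Sym F) := by
  have := Hom.monomial (F := F) 0 1
  simpa [wt, Finsupp.sum, MvPolynomial.monomial_eq] using this

lemma Hom.hprod (k : Partition) : Hom k.size (hprod F k) := by
  classical
  have : ∀ (s : Finset ℕ), Hom (∑ j ∈ s, k.part j) (∏ j ∈ s, SkewPieriFormalization.hsym F (k.part j)) := by
    intro s
    induction s using Finset.induction with
    | empty => simpa using Hom.one
    | insert _ _ h ih =>
        next a s' =>
          rw [Finset.sum_insert h, Finset.prod_insert h]
          exact (Hom.hsym (k.part a)).mul ih
  exact this _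

/-- homogeneous polynomials of different degrees are orthogonal. -/
lemma inner_eq_zero_of_hom {q t : F} {a b : ℕ} {f g : Sym F}
    (hf : Hom a f) (hg : Hom b g) (hab : a ≠ b) : innerQT q t f g = 0 := by
  rw [innerQT]
  refine Finset.sum_eq_zero fun d hd => ?_
  by_cases h1 : f.coeff d = 0
  · rw [h1, zero_mul, zero_mul]
  · by_cases h2 : g.coeff d = 0
    · rw [h2, mul_zero, zero_mul]
    · exact absurd ((hf d h1).symm.trans (hg d h2)) hab

end Hom


section Span

open Finset MvPolynomial Submodule

variable {F : Type*} [Field F] [CharZero F]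

lemma innerQT_zero_right (q t : F) (f : Sym F) : innerQT q t f 0 = 0 := by
  rw [innerQT]
  exact Finset.sum_eq_zero fun d _ => by simp

lemma wgt_eq_zF_mul (q t : F) (d : ℕ →₀ ℕ) :
    wgt q t d = zF d * d.prod fun n m => ((1 - q ^ (n + 1)) / (1 - t ^ (n + 1))) ^ m := by
  rw [wgt, zF, Finsupp.prod, Finsupp.prod, Finsupp.prod, ← Finset.prod_mul_distrib]

lemma wgt_tt {t : F} (ht : ∀ r : ℕ, 1 ≤ r → t ^ r ≠ 1) (d : ℕ →₀ ℕ) :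
    wgt t t d = zF d := by
  rw [wgt_eq_zF_mul]
  have h1 : (d.prod fun n m => ((1 - t ^ (n + 1)) / (1 - t ^ (n + 1))) ^ m) = 1 := by
    rw [Finsupp.prod]
    refine Finset.prod_eq_one fun n _ => ?_
    rw [div_self (sub_ne_zero.mpr (Ne.symm (ht (n + 1) (by omega)))), one_pow]
  rw [h1, mul_one]

lemma wgt_ne_zero {q t : F} (hq : ∀ r : ℕ, 1 ≤ r → q ^ r ≠ 1)
    (ht : ∀ r : ℕ, 1 ≤ r → t ^ r ≠ 1) (d : ℕ →₀ ℕ) : wgt q t d ≠ 0 := by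
  rw [wgt_eq_zF_mul]
  refine mul_ne_zero (zF_ne_zero d) ?_
  rw [Finsupp.prod]
  refine Finset.prod_ne_zero_iff.mpr fun n _ => pow_ne_zero _ (div_ne_zero
    (sub_ne_zero.mpr (Ne.symm (hq (n + 1) (by omega))))
    (sub_ne_zero.mpr (Ne.symm (ht (n + 1) (by omega)))))

lemma eq_zero_of_inner_monomial {q t : F} (hw : ∀ d, wgt q t d ≠ 0) {f : Sym F}
    (h : ∀ d, innerQT q t f (MvPolynomial.monomial d 1) = 0) : f = 0 := by
  apply MvPolynomial.ext
  intro d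
  have hd := h d
  rw [innerQT_monomial_right] at hd
  rcases mul_eq_zero.mp hd with h1 | h2
  · simpa using h1
  · exact absurd h2 (hw d)

lemma hprod_eq_monprod (k : Partition) :
    hprod F k = (mon k).prod fun n m => SkewPieriFormalization.hsym F (n + 1) ^ m := by
  classical
  have hmaps : ∀ j ∈ k.part.support, k.part j - 1 ∈ (mon k).support := by
    intro j hj
    rw [Finsupp.mem_support_iff, mon_apply]
    have hj1 : 1 ≤ k.part j := by rw [Finsupp.mem_support_iff] at hj; omega
    have hm : j ∈ k.part.support.filter fun i => k.part i = k.part j - 1 + 1 :=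
      Finset.mem_filter.mpr ⟨hj, by omega⟩
    intro hc
    rw [Finset.card_eq_zero] at hc
    rw [hc] at hm
    simp at hm
  rw [hprod, Finsupp.prod,
    ← Finset.prod_fiberwise_of_maps_to hmaps (fun j => SkewPieriFormalization.hsym F (k.part j))]
  refine Finset.prod_congr rfl fun n hn => ?_
  have hfib : ∀ j ∈ k.part.support.filter (fun i => k.part i - 1 = n),
      SkewPieriFormalization.hsym F (k.part j) = SkewPieriFormalization.hsym F (n + 1) := by
    intro j hj
    simp only [Finset.mem_filter, Finsupp.mem_support_iff] at hj
    have : k.part j = n + 1 := by omega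
    rw [this]
  rw [Finset.prod_congr rfl hfib, Finset.prod_const, mon_apply]
  congr 2
  ext j
  simp only [Finset.mem_filter, Finsupp.mem_support_iff]
  omega

lemma hprod_toPart (d : ℕ →₀ ℕ) :
    hprod F (toPart d) = d.prod fun n m => SkewPieriFormalization.hsym F (n + 1) ^ m := by
  rw [hprod_eq_monprod, mon_toPart]

lemma hprod_one : hprod F (toPart 0) = 1 := by
  rw [hprod_toPart]
  simp [Finsupp.prod]

lemma hprod_single (r : ℕ) :
    hprod F (toPart (Finsupp.single r 1)) = SkewPieriFormalization.hsym F (r + 1) := by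
  rw [hprod_toPart, Finsupp.prod_single_index (by rw [pow_zero]), pow_one]

lemma hprod_mul (k l : Partition) :
    hprod F k * hprod F l = hprod F (toPart (mon k + mon l)) := by
  rw [hprod_toPart, hprod_eq_monprod, hprod_eq_monprod]
  exact (Finsupp.prod_add_index (fun a _ => pow_zero _) (fun a _ b c => pow_add _ _ _)).symm

lemma X_mem_adjoin (n : ℕ) :
    (X n : Sym F) ∈ Algebra.adjoin F (Set.range fun r : ℕ => SkewPieriFormalization.hsym F (r + 1)) := by
  induction n using Nat.strong_induction_on with
  | _ n ih =>
    have hnew := newton (F := F) (n + 1)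
    simp only [Nat.add_sub_cancel] at hnew
    have hs0 : SkewPieriFormalization.hsym F 0 = 1 := hsym_zero
    have hX : (X n : Sym F) = ((n + 1 : ℕ) : F) • SkewPieriFormalization.hsym F (n + 1)
        - ∑ j ∈ Finset.range n, (X j : Sym F) * SkewPieriFormalization.hsym F (n - j) := by
      rw [hnew, Finset.sum_range_succ, Nat.sub_self, hs0, mul_one]
      ring
    rw [hX]
    refine sub_mem (Subalgebra.smul_mem _ ?_ _) (Subalgebra.sum_mem _ fun j hj => ?_)
    · exact Algebra.subset_adjoin ⟨n, rfl⟩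
    · refine mul_mem (ih j (Finset.mem_range.mp hj)) ?_
      have hj' : j < n := Finset.mem_range.mp hj
      have h2 : n - j = (n - j - 1) + 1 := by omega
      rw [h2]
      exact Algebra.subset_adjoin ⟨n - j - 1, rfl⟩

lemma adjoin_hsym_top :
    Algebra.adjoin F (Set.range fun r : ℕ => SkewPieriFormalization.hsym F (r + 1)) = ⊤ := by
  rw [eq_top_iff, ← MvPolynomial.adjoin_range_X]
  refine Algebra.adjoin_le ?_
  rintro _ ⟨n, rfl⟩
  exact X_mem_adjoin n

lemma eq_zero_of_inner_hprod {t : F} (ht : ∀ r : ℕ, 1 ≤ r → t ^ r ≠ 1) {f : Sym F}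
    (h : ∀ mu : Partition, innerQT t t f (hprod F mu) = 0) : f = 0 := by
  classical
  set s : Set (Sym F) := Set.range fun r : ℕ => SkewPieriFormalization.hsym F (r + 1) with hs
  have hprodmem : ∀ x ∈ Submonoid.closure s, ∃ k : Partition, x = hprod F k := by
    intro x hx
    induction hx using Submonoid.closure_induction with
    | mem x hx =>
        obtain ⟨r, rfl⟩ := hx
        exact ⟨toPart (Finsupp.single r 1), (hprod_single r).symm⟩
    | one => exact ⟨toPart 0, hprod_one.symm⟩
    | mul x y _ _ hx hy =>
        obtain ⟨k, rfl⟩ := hx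
        obtain ⟨l, rfl⟩ := hy
        exact ⟨toPart (mon k + mon l), hprod_mul k l⟩
  have hspan : ∀ g ∈ Submodule.span F ((Submonoid.closure s : Submonoid (Sym F)) : Set (Sym F)),
      innerQT t t f g = 0 := by
    intro g hg
    induction hg using Submodule.span_induction with
    | mem x hx =>
        obtain ⟨k, rfl⟩ := hprodmem x hx
        exact h k
    | zero => exact innerQT_zero_right ..
    | add x y _ _ hx hy => rw [innerQT_add_right, hx, hy, add_zero]
    | smul c x _ hx => rw [innerQT_smul_right, hx, mul_zero]
  refine eq_zero_of_inner_monomial (fun d => by rw [wgt_tt ht]; exact zF_ne_zero d) ?_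
  intro d
  apply hspan
  have hmem : (MvPolynomial.monomial d 1 : Sym F) ∈ Algebra.adjoin F s := by
    rw [hs, adjoin_hsym_top]
    trivial
  rw [← Subalgebra.mem_toSubmodule, Algebra.adjoin_eq_span] at hmem
  exact hmem

lemma eq_zero_of_inner_hprod_hom {t : F} (ht : ∀ r : ℕ, 1 ≤ r → t ^ r ≠ 1) {n : ℕ}
    {f : Sym F} (hf : Hom n f)
    (h : ∀ mu : Partition, mu.size = n → innerQT t t f (hprod F mu) = 0) : f = 0 := by
  refine eq_zero_of_inner_hprod ht fun mu => ?_
  by_cases hsz : mu.size = n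
  · exact h mu hsz
  · exact inner_eq_zero_of_hom hf (Hom.hprod mu) fun hc => hsz hc.symm

end Span


section F2Facts

lemma ratfunc_X_pow_ne_one {K : Type*} [Field K] {r : ℕ} (hr : 1 ≤ r) :
    (RatFunc.X : RatFunc K) ^ r ≠ 1 := by
  intro h
  have hmap : algebraMap (Polynomial K) (RatFunc K) ((Polynomial.X : Polynomial K) ^ r)
      = algebraMap (Polynomial K) (RatFunc K) 1 := by
    rw [map_pow, map_one, RatFunc.algebraMap_X]
    exact h
  have hX := RatFunc.algebraMap_injective K hmap
  have h1 := congrArg Polynomial.natDegree hX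
  rw [Polynomial.natDegree_X_pow, Polynomial.natDegree_one] at h1
  omega

lemma q2_pow_ne_one : ∀ r : ℕ, 1 ≤ r → q2 ^ r ≠ 1 := fun _ hr => ratfunc_X_pow_ne_one hr

lemma t1_pow_ne_one : ∀ r : ℕ, 1 ≤ r → t1 ^ r ≠ 1 := fun _ hr => ratfunc_X_pow_ne_one hr

lemma t2_pow_ne_one : ∀ r : ℕ, 1 ≤ r → t2 ^ r ≠ 1 := by
  intro r hr h
  rw [t2, ← map_pow, show (1 : F2) = RatFunc.C (1 : F1) from (map_one _).symm] at h
  exact t1_pow_ne_one r hr (RatFunc.C.injective h)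

instance : CharZero F1 := ⟨fun a b h => by
  rw [← map_natCast (RatFunc.C : ℚ →+* F1) a, ← map_natCast (RatFunc.C : ℚ →+* F1) b] at h
  have h2 : ((a : ℚ)) = (b : ℚ) := RatFunc.C.injective h
  exact_mod_cast h2⟩

instance : CharZero F2 := ⟨fun a b h => by
  rw [← map_natCast (RatFunc.C : F1 →+* F2) a, ← map_natCast (RatFunc.C : F1 →+* F2) b] at h
  have h2 : ((a : F1)) = (b : F1) := RatFunc.C.injective h
  exact_mod_cast h2⟩

end F2Facts

section Mac

open Finset MvPolynomial Submodule

variable (P : Partition → Sym F2) (hP : IsMacdonald q2 t2 P)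

/-- the degree-`k` component used to prove homogeneity. -/
private def comp (f : Sym F2) (k : ℕ) : Sym F2 :=
  ∑ d ∈ f.support.filter (fun d => wt d = k), MvPolynomial.monomial d (f.coeff d)

lemma coeff_comp (f : Sym F2) (k : ℕ) (e : ℕ →₀ ℕ) :
    (comp f k).coeff e = if wt e = k then f.coeff e else 0 := by
  classical
  rw [comp, MvPolynomial.coeff_sum]
  have : ∀ d ∈ f.support.filter (fun d => wt d = k),
      (MvPolynomial.monomial d (f.coeff d)).coeff e
        = if d = e then f.coeff d else 0 := fun d _ => MvPolynomial.coeff_monomial _ _ _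
  rw [Finset.sum_congr rfl this, Finset.sum_ite_eq' _ e (fun d => f.coeff d)]
  simp only [Finset.mem_filter, MvPolynomial.mem_support_iff]
  by_cases hw : wt e = k
  · rw [if_pos hw]
    by_cases hs : f.coeff e = 0
    · rw [if_neg (by tauto), hs]
    · rw [if_pos ⟨hs, hw⟩]
  · rw [if_neg (by tauto), if_neg hw]

lemma comp_hom (f : Sym F2) (k : ℕ) : Hom k (comp f k) := by
  intro d hd
  rw [coeff_comp] at hd
  split at hd
  · assumption
  · simp at hd

include hP in
lemma P_hom (lam : Partition) : Hom lam.size (P lam) := by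
  intro d hd
  by_contra hk
  set k := wt d with hkdef
  have hcz : comp (P lam) k = 0 := by
    refine eq_zero_of_inner_hprod_hom t2_pow_ne_one (comp_hom (P lam) k) ?_
    intro mu hmu
    have heq : innerQT t2 t2 (comp (P lam) k) (hprod F2 mu)
        = innerQT t2 t2 (P lam) (hprod F2 mu) := by
      rw [innerQT_eq_sum t2 t2 _ _ (S := (comp (P lam) k).support ∪ (P lam).support)
          Finset.subset_union_left,
        innerQT_eq_sum t2 t2 (P lam) _ (S := (comp (P lam) k).support ∪ (P lam).support)
          Finset.subset_union_right]
      refine Finset.sum_congr rfl fun e _ => ?_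
      by_cases hw : wt e = k
      · rw [coeff_comp, if_pos hw]
      · by_cases hh : (hprod F2 mu).coeff e = 0
        · rw [hh, mul_zero, zero_mul, mul_zero, zero_mul]
        · exact absurd ((Hom.hprod mu) e hh) (by rw [hmu]; exact hw)
    rw [heq]
    refine hP.2.2 lam mu fun hdom => ?_
    exact hk (hmu.symm.trans hdom.1)
  have := coeff_comp (P lam) k d
  rw [hcz, if_pos rfl] at this
  simp only [MvPolynomial.coeff_zero] at this
  exact hd this.symm

lemma innerQT_zero_left (q t : F2) (g : Sym F2) : innerQT q t 0 g = 0 := by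
  rw [innerQT_comm]
  exact innerQT_zero_right q t g

/-- the partial sums determine a partition of given size. -/
lemma part_lt_size {a : Partition} {j : ℕ} (h : a.part j ≠ 0) : j < a.size := by
  have hsub : Finset.range (j + 1) ⊆ a.part.support := by
    intro i hi
    simp only [Finset.mem_range] at hi
    rw [Finsupp.mem_support_iff]
    have := a.antitone' (show i ≤ j by omega)
    omega
  have h1 : ∑ i ∈ Finset.range (j + 1), a.part i ≤ ∑ i ∈ a.part.support, a.part i :=
    Finset.sum_le_sum_of_subset hsub
  have h2 : j + 1 ≤ ∑ i ∈ Finset.range (j + 1), a.part i := by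
    calc j + 1 = ∑ _i ∈ Finset.range (j + 1), 1 := by simp
    _ ≤ ∑ i ∈ Finset.range (j + 1), a.part i := by
        refine Finset.sum_le_sum fun i hi => ?_
        simp only [Finset.mem_range] at hi
        have := a.antitone' (show i ≤ j by omega)
        omega
  have h3 : a.size = ∑ i ∈ a.part.support, a.part i := rfl
  omega

lemma psum_determines {a b : Partition} {n : ℕ} (ha : a.size = n) (hb : b.size = n)
    (h : ∀ i ∈ Finset.range (n + 1), a.psum i = b.psum i) : a = b := by
  refine Partition.ext' (Finsupp.ext fun j => ?_)
  by_cases hj : j < n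
  · have h1 := h j (by simp; omega)
    have h2 := h (j + 1) (by simp; omega)
    rw [Partition.psum, Partition.psum, Finset.sum_range_succ, Finset.sum_range_succ] at h2
    rw [Partition.psum, Partition.psum] at h1
    omega
  · by_cases haj : a.part j = 0
    · by_cases hbj : b.part j = 0
      · rw [haj, hbj]
      · have := part_lt_size hbj
        omega
    · have := part_lt_size haj
      omega

include hP in
lemma lin_indep (n : ℕ) : ∀ s : Finset Partition, (∀ k ∈ s, k.size = n) →
    ∀ c : Partition → F2, (∑ k ∈ s, c k • P k) = 0 → ∀ k ∈ s, c k = 0 := by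
  intro s
  induction s using Finset.strongInduction with
  | _ s ih =>
    intro hsz c hsum k hk
    have hne : s.Nonempty := ⟨k, hk⟩
    obtain ⟨mu, hmu, hmax⟩ := Finset.exists_max_image s
      (fun a => ∑ i ∈ Finset.range (n + 1), a.psum i) hne
    have hcmu : c mu = 0 := by
      have h0 := congrArg (fun g => innerQT t2 t2 g (hprod F2 mu)) hsum
      rw [innerQT_sum_left, innerQT_zero_left] at h0
      have hterm : ∀ j ∈ s, innerQT t2 t2 (c j • P j) (hprod F2 mu)
          = if j = mu then c mu else 0 := by
        intro j hj
        rw [innerQT_smul_left]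
        by_cases hjm : j = mu
        · rw [if_pos hjm, hjm, hP.2.1 mu, mul_one]
        · rw [if_neg hjm, hP.2.2 j mu, mul_zero]
          intro hdom
          apply hjm
          refine psum_determines (hsz j hj) (hsz mu hmu) ?_
          have hle : ∀ i ∈ Finset.range (n + 1), mu.psum i ≤ j.psum i :=
            fun i _ => hdom.2 i
          have hsum_le : (∑ i ∈ Finset.range (n + 1), mu.psum i)
              ≤ ∑ i ∈ Finset.range (n + 1), j.psum i := Finset.sum_le_sum hle
          have hsum_ge := hmax j hj
          have hsums : (∑ i ∈ Finset.range (n + 1), mu.psum i)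
              = ∑ i ∈ Finset.range (n + 1), j.psum i := by omega
          intro i hi
          exact ((Finset.sum_eq_sum_iff_of_le hle).mp hsums i hi).symm
      rw [Finset.sum_congr rfl hterm, Finset.sum_ite_eq' s mu (fun _ => c mu),
        if_pos hmu] at h0
      exact h0
    by_cases hkm : k = mu
    · rw [hkm]; exact hcmu
    · have hsub : s.erase mu ⊂ s := Finset.erase_ssubset hmu
      refine ih _ hsub (fun j hj => hsz j (Finset.mem_of_mem_erase hj)) c ?_ k
        (Finset.mem_erase.mpr ⟨hkm, hk⟩)
      have h2 : (∑ j ∈ s.erase mu, c j • P j) = ∑ j ∈ s, c j • P j := by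
        refine Finset.sum_subset (Finset.erase_subset mu s) fun j hj hj2 => ?_
        have hje : j = mu := by
          by_contra hne
          exact hj2 (Finset.mem_erase.mpr ⟨hne, hj⟩)
        rw [hje, hcmu, zero_smul]
      rw [h2, hsum]

include hP in
lemma exists_rep {n : ℕ} (g : Sym F2) (hg : Hom n g) :
    ∃ cc : Partition → F2, g = ∑ k ∈ Pn n, cc k • P k := by
  classical
  set T : Finset (Sym F2) := (Md n).image (fun d => MvPolynomial.monomial d (1 : F2)) with hT
  set V : Submodule F2 (Sym F2) := Submodule.span F2 (T : Set (Sym F2)) with hV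
  have hmemV : ∀ f : Sym F2, Hom n f → f ∈ V := by
    intro f hf
    rw [MvPolynomial.as_sum f]
    refine Submodule.sum_mem V fun d hd => ?_
    have : (MvPolynomial.monomial d (f.coeff d)) = f.coeff d • MvPolynomial.monomial d (1 : F2) := by
      rw [MvPolynomial.smul_monomial, smul_eq_mul, mul_one]
    rw [this]
    refine Submodule.smul_mem V _ (Submodule.subset_span ?_)
    rw [hT]
    simp only [Finset.coe_image, Set.mem_image, Finset.mem_coe]
    exact ⟨d, mem_Md.mpr (hf d (MvPolynomial.mem_support_iff.mp hd)), rfl⟩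
  have hPV : ∀ k : ↑(Pn n), (P k.1) ∈ V := by
    intro k
    refine hmemV _ ?_
    have := P_hom P hP k.1
    rwa [mem_Pn.mp k.2] at this
  set v : ↑(Pn n) → V := fun k => ⟨P k.1, hPV k⟩ with hv
  haveI hfd : FiniteDimensional F2 V := by
    rw [hV]
    infer_instance
  have hli : LinearIndependent F2 v := by
    rw [linearIndependent_iff']
    intro sub gc hzero i hi
    set c : Partition → F2 := fun k => if h : k ∈ Pn n then gc ⟨k, h⟩ else 0 with hc
    have hzero2 : (∑ k ∈ sub.image Subtype.val, c k • P k) = 0 := by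
      rw [Finset.sum_image (fun a _ b _ h => Subtype.val_injective h)]
      have := congrArg (Subtype.val : V → Sym F2) hzero
      push_cast at this
      rw [← this]
      refine (Finset.sum_congr rfl fun j _ => ?_)
      rw [hc]
      simp only [j.2, dif_pos]
      rfl
    have := lin_indep P hP n (sub.image Subtype.val)
      (fun k hk => by
        obtain ⟨j, _, rfl⟩ := Finset.mem_image.mp hk
        exact mem_Pn.mp j.2)
      c hzero2 i.1 (Finset.mem_image.mpr ⟨i, hi, rfl⟩)
    rw [hc] at this
    simpa only [i.2, dif_pos] using this
  have hcard : Fintype.card ↑(Pn n) = (Pn n).card := Fintype.card_coe _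
  have hfr : (T : Set (Sym F2)).finrank F2 = Module.finrank F2 V := by rw [hV]; rfl
  have hrank1 : Module.finrank F2 V ≤ T.card := by
    rw [← hfr]
    exact finrank_span_finset_le_card T
  have hrank2 : Fintype.card ↑(Pn n) ≤ Module.finrank F2 V :=
    hli.fintype_card_le_finrank
  have hTcard : T.card ≤ (Md n).card := Finset.card_image_le
  have hPncard : (Pn n).card = (Md n).card := by
    rw [Pn]
    exact Finset.card_image_of_injective _ toPart_injective
  have hspan : Submodule.span F2 (Set.range v) = ⊤ :=
    hli.span_eq_top_of_card_eq_finrank' (by omega)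
  have hgV : (⟨g, hmemV g hg⟩ : V) ∈ Submodule.span F2 (Set.range v) := by
    rw [hspan]; trivial
  rw [mem_span_range_iff_exists_fun] at hgV
  obtain ⟨cf, hcf⟩ := hgV
  have hcoe := congrArg (Subtype.val : V → Sym F2) hcf
  push_cast at hcoe
  set cc : Partition → F2 := fun k => if h : k ∈ Pn n then cf ⟨k, h⟩ else 0 with hcc
  refine ⟨cc, ?_⟩
  rw [← hcoe]
  rw [Finset.univ_eq_attach]
  rw [← Finset.sum_attach (Pn n) (fun k => cc k • P k)]
  refine (Finset.sum_congr rfl fun j _ => ?_).symm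
  rw [hcc]
  simp only [j.2, dif_pos]
  rfl

end Mac


section Mac2

open Finset MvPolynomial

variable (P : Partition → Sym F2) (hP : IsMacdonald q2 t2 P)

include hP in
lemma inner_PP_ne_zero (mu : Partition) : innerQT q2 t2 (P mu) (P mu) ≠ 0 := by
  intro h0
  have hz : P mu = 0 := by
    refine eq_zero_of_inner_monomial (wgt_ne_zero q2_pow_ne_one t2_pow_ne_one) ?_
    intro d
    by_cases hw : wt d = mu.size
    · obtain ⟨cc, hcc⟩ := exists_rep P hP (n := mu.size) (MvPolynomial.monomial d 1)
        (by rw [← hw]; exact Hom.monomial d 1)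
      rw [hcc, innerQT_sum_right]
      refine Finset.sum_eq_zero fun k _ => ?_
      rw [innerQT_smul_right]
      by_cases hkm : k = mu
      · rw [hkm, h0, mul_zero]
      · rw [hP.1 mu k (fun h => hkm h.symm), mul_zero]
    · rw [innerQT_monomial_right]
      have hc0 : (P mu).coeff d = 0 := by
        by_contra hc
        exact hw (P_hom P hP mu d hc)
      rw [hc0, zero_mul]
  have h1 := hP.2.1 mu
  rw [hz, innerQT_zero_left] at h1
  exact one_ne_zero h1.symm

include hP in
lemma inner_Q_P (k j : Partition) :
    innerQT q2 t2 (macQ q2 t2 P k) (P j) = if k = j then 1 else 0 := by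
  rw [macQ, innerQT_smul_left, bnorm]
  by_cases h : k = j
  · rw [if_pos h, ← h]
    exact inv_mul_cancel₀ (inner_PP_ne_zero P hP k)
  · rw [if_neg h, hP.1 k j h, mul_zero]

include hP in
lemma expand {n : ℕ} (g : Sym F2) (hg : Hom n g) :
    g = ∑ k ∈ Pn n, innerQT q2 t2 (macQ q2 t2 P k) g • P k := by
  classical
  obtain ⟨cc, hcc⟩ := exists_rep P hP g hg
  have hco : ∀ k ∈ Pn n, innerQT q2 t2 (macQ q2 t2 P k) g = cc k := by
    intro k hk
    rw [hcc, innerQT_sum_right, Finset.sum_eq_single k]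
    · rw [innerQT_smul_right, inner_Q_P P hP k k, if_pos rfl, mul_one]
    · intro j _ hjk
      rw [innerQT_smul_right, inner_Q_P P hP k j, if_neg (fun h => hjk h.symm), mul_zero]
    · intro hk2
      exact absurd hk hk2
  conv_lhs => rw [hcc]
  refine Finset.sum_congr rfl fun k hk => ?_
  rw [hco k hk]

lemma len_le_wt (d : ℕ →₀ ℕ) : len d ≤ wt d := by
  refine Finset.sum_le_sum fun n _ => ?_
  exact Nat.le_mul_of_pos_left _ (by omega)

lemma neg_one_sq_pow (m : ℕ) : (-1 : F2) ^ m * (-1 : F2) ^ m = 1 := by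
  rw [← pow_add, ← two_mul, pow_mul]
  norm_num

lemma plethAB_h {r : ℕ} {f : Sym F2} (hf : Hom r f) :
    plethAB t2 1 q2 f = innerQT q2 t2 f (SkewPieriFormalization.hsym F2 r) := by
  rw [plethAB, MvPolynomial.eval_eq, innerQT]
  refine Finset.sum_congr rfl fun d hd => ?_
  have hwt : wt d = r := hf d (MvPolynomial.mem_support_iff.mp hd)
  rw [coeff_hsym, if_pos hwt, show (d.prod fun n m => (((n : F2) + 1) ^ m * (Nat.factorial m : F2)) * ((1 - q2 ^ (n + 1)) / (1 - t2 ^ (n + 1))) ^ m) = wgt q2 t2 d from rfl,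
    wgt_eq_zF_mul]
  have hz : (zF d : F2) ≠ 0 := zF_ne_zero d
  have hprodeq : (∏ i ∈ d.support, (((1 : F2) ^ (i + 1) - q2 ^ (i + 1)) / (1 - t2 ^ (i + 1))) ^ d i)
      = d.prod fun n m => ((1 - q2 ^ (n + 1)) / (1 - t2 ^ (n + 1))) ^ m := by
    rw [Finsupp.prod]
    exact Finset.prod_congr rfl fun i _ => by rw [one_pow]
  rw [hprodeq]
  field_simp

lemma plethAB_e {r : ℕ} {f : Sym F2} (hf : Hom r f) :
    plethAB t2 q2 1 f = (-1 : F2) ^ r * innerQT q2 t2 f (esym F2 r) := by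
  rw [plethAB, MvPolynomial.eval_eq, innerQT, Finset.mul_sum]
  refine Finset.sum_congr rfl fun d hd => ?_
  have hwt : wt d = r := hf d (MvPolynomial.mem_support_iff.mp hd)
  have hlen : len d ≤ r := by rw [← hwt]; exact len_le_wt d
  rw [coeff_esym, if_pos hwt, show (d.prod fun n m => (((n : F2) + 1) ^ m * (Nat.factorial m : F2)) * ((1 - q2 ^ (n + 1)) / (1 - t2 ^ (n + 1))) ^ m) = wgt q2 t2 d from rfl,
    wgt_eq_zF_mul]
  have hz : (zF d : F2) ≠ 0 := zF_ne_zero d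
  have hbase : ∀ i ∈ d.support,
      ((q2 ^ (i + 1) - (1 : F2) ^ (i + 1)) / (1 - t2 ^ (i + 1))) ^ d i
        = (-1 : F2) ^ d i * (((1 - q2 ^ (i + 1)) / (1 - t2 ^ (i + 1))) ^ d i) := by
    intro i _
    rw [one_pow, ← mul_pow]
    congr 1
    rw [neg_one_mul, ← neg_div, neg_sub]
  rw [Finset.prod_congr rfl hbase, Finset.prod_mul_distrib, Finset.prod_pow_eq_pow_sum]
  have hlend : (∑ i ∈ d.support, d i) = len d := rfl
  rw [hlend]
  have hprodeq : (∏ i ∈ d.support, (((1 : F2) - q2 ^ (i + 1)) / (1 - t2 ^ (i + 1))) ^ d i)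
      = d.prod fun n m => ((1 - q2 ^ (n + 1)) / (1 - t2 ^ (n + 1))) ^ m := rfl
  rw [hprodeq]
  have hsign : (-1 : F2) ^ (r - len d) * (-1) ^ (len d) = (-1) ^ r :=
    pow_sub_mul_pow _ hlen
  have key : (-1 : F2) ^ r * (-1) ^ (r - len d) = (-1) ^ (len d) := by
    rw [← hsign, mul_comm ((-1 : F2) ^ (r - len d)) ((-1 : F2) ^ (len d)), mul_assoc,
      neg_one_sq_pow, mul_one]
  rw [← key]
  field_simp

include hP in
lemma Q_hom (lam : Partition) : Hom lam.size (macQ q2 t2 P lam) := (P_hom P hP lam).smul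

include hP in
lemma lr_eq_zero {mu nu lam : Partition} (h : mu.size + nu.size ≠ lam.size) :
    lr q2 t2 P mu nu lam = 0 :=
  inner_eq_zero_of_hom (Q_hom P hP lam) ((P_hom P hP mu).mul (P_hom P hP nu))
    fun hc => h hc.symm

include hP in
lemma skewQ_eq (lam mu : Partition) : skewQ q2 t2 P lam mu
    = ∑ k ∈ Pn (lam.size - mu.size), lr q2 t2 P mu k lam • macQ q2 t2 P k := by
  rw [skewQ]
  refine finsum_eq_finset_sum_of_support_subset _ ?_
  intro nu hnu
  rw [Function.mem_support] at hnu
  have hlr : lr q2 t2 P mu nu lam ≠ 0 := by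
    intro h
    apply hnu
    rw [show innerQT q2 t2 (macQ q2 t2 P lam) (P mu * P nu) = lr q2 t2 P mu nu lam from rfl,
      h, zero_smul]
  have hsz : mu.size + nu.size = lam.size := by
    by_contra h
    exact hlr (lr_eq_zero P hP h)
  simp only [Finset.coe_sort_coe, Finset.mem_coe]
  rw [mem_Pn]
  omega

lemma plethAB_sum (a b : F2) {ι : Type*} (s : Finset ι) (c : ι → F2) (g : ι → Sym F2) :
    plethAB t2 a b (∑ k ∈ s, c k • g k) = ∑ k ∈ s, c k * plethAB t2 a b (g k) := by
  rw [plethAB, map_sum]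
  exact Finset.sum_congr rfl fun k _ => MvPolynomial.smul_eval _ _ _

include hP in
lemma vs_formula {lam mu : Partition} {m : ℕ} (hsz : mu.size + m = lam.size) :
    vsM q2 t2 P lam mu = innerQT q2 t2 (macQ q2 t2 P lam) (P mu * esym F2 m) := by
  have hm : lam.size - mu.size = m := by omega
  rw [vsM, skewQ_eq P hP, hm, plethAB_sum]
  have hsign : ((-1 : F2) ^ ((lam.size : ℤ) - (mu.size : ℤ))) = (-1 : F2) ^ m := by
    rw [show (lam.size : ℤ) - (mu.size : ℤ) = (m : ℤ) by omega]
    exact zpow_natCast _ m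
  rw [hsign]
  have hrep := expand P hP (esym F2 m) (Hom.esym m)
  conv_rhs => rw [hrep]
  rw [Finset.mul_sum, Finset.mul_sum]
  rw [innerQT_sum_right]
  refine Finset.sum_congr rfl fun k hk => ?_
  have hk' : k.size = m := mem_Pn.mp hk
  rw [plethAB_e (f := macQ q2 t2 P k) (hk' ▸ Q_hom P hP k)]
  rw [mul_smul_comm, innerQT_smul_right]
  have hsq := neg_one_sq_pow m
  set E := innerQT q2 t2 (macQ q2 t2 P k) (esym F2 m)
  set L := lr q2 t2 P mu k lam
  set I := innerQT q2 t2 (macQ q2 t2 P lam) (P mu * P k)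
  have hLI : L = I := rfl
  rw [← hLI]
  linear_combination (L * E) * hsq

include hP in
lemma sk_formula (mu nu : Partition) :
    skM q2 t2 P mu nu = innerQT q2 t2 (macQ q2 t2 P mu)
      (P nu * SkewPieriFormalization.hsym F2 (mu.size - nu.size)) := by
  rw [skM, skewQ_eq P hP, plethAB_sum]
  have hrep := expand P hP (SkewPieriFormalization.hsym F2 (mu.size - nu.size))
    (Hom.hsym (mu.size - nu.size))
  conv_rhs => rw [hrep]
  rw [Finset.mul_sum, innerQT_sum_right]
  refine Finset.sum_congr rfl fun k hk => ?_
  have hk' : k.size = mu.size - nu.size := mem_Pn.mp hk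
  rw [plethAB_h (f := macQ q2 t2 P k) (hk' ▸ Q_hom P hP k)]
  rw [mul_smul_comm, innerQT_smul_right]
  have : lr q2 t2 P nu k mu = innerQT q2 t2 (macQ q2 t2 P mu) (P nu * P k) := rfl
  rw [← this]
  ring

end Mac2


section Mac3

open Finset MvPolynomial

lemma column_part (m j : ℕ) : (Partition.column m).part j = if j < m then 1 else 0 := rfl

lemma column_support (m : ℕ) : (Partition.column m).part.support = Finset.range m := by
  ext j
  rw [Finsupp.mem_support_iff, column_part, Finset.mem_range]
  by_cases hj : j < m
  · simp [hj]
  · simp [hj]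

lemma column_size (m : ℕ) : (Partition.column m).size = m := by
  have h1 : (Partition.column m).size
      = ∑ j ∈ (Partition.column m).part.support, (Partition.column m).part j := rfl
  rw [h1, column_support,
    Finset.sum_congr rfl (fun j hj => by
      rw [column_part, if_pos (Finset.mem_range.mp hj)])]
  simp

lemma column_parts_le_one (m j : ℕ) : (Partition.column m).part j ≤ 1 := by
  rw [column_part]
  split <;> omega

lemma eq_column_of_parts_le_one {a : Partition} (h : ∀ j, a.part j ≤ 1) :
    a = Partition.column a.size := by
  have hdc : ∀ i j : ℕ, i ≤ j → j ∈ a.part.support → i ∈ a.part.support := by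
    intro i j hij hj
    rw [Finsupp.mem_support_iff] at hj ⊢
    have := a.antitone' hij
    omega
  have hiff := downclosed_mem_iff hdc
  have hsize : a.size = a.part.support.card := by
    have h1 : a.size = ∑ j ∈ a.part.support, a.part j := rfl
    rw [h1, Finset.sum_congr rfl (fun j hj => by
      have h2 := h j
      rw [Finsupp.mem_support_iff] at hj
      omega : ∀ j ∈ a.part.support, a.part j = 1)]
    simp
  refine Partition.ext' (Finsupp.ext fun j => ?_)
  rw [column_part]
  by_cases hj : j < a.size
  · rw [if_pos hj]
    have hmem : j ∈ a.part.support := by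
      rw [hiff]
      omega
    rw [Finsupp.mem_support_iff] at hmem
    have := h j
    omega
  · rw [if_neg hj]
    by_contra hc
    have hmem : j ∈ a.part.support := Finsupp.mem_support_iff.mpr hc
    rw [hiff] at hmem
    omega

lemma phi_hsym (r : ℕ) :
    MvPolynomial.eval (fun n : ℕ => (-1 : F2) ^ n) (hsym F2 r)
      = if r ≤ 1 then 1 else 0 := by
  induction r using Nat.strong_induction_on with
  | _ r ih =>
    by_cases h0 : r = 0
    · subst h0
      rw [hsym_zero, map_one, if_pos (by omega)]
    · have hnewt := congrArg (MvPolynomial.eval (fun n : ℕ => (-1 : F2) ^ n))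
        (newton (F := F2) r)
      rw [MvPolynomial.smul_eval, map_sum] at hnewt
      have hterm : ∀ j ∈ Finset.range r,
          MvPolynomial.eval (fun n : ℕ => (-1 : F2) ^ n)
              ((X j : Sym F2) * hsym F2 (r - 1 - j))
            = (-1 : F2) ^ j * (if r - 1 - j ≤ 1 then 1 else 0) := by
        intro j hj
        rw [map_mul, MvPolynomial.eval_X]
        congr 1
        exact ih (r - 1 - j) (by omega)
      rw [Finset.sum_congr rfl hterm] at hnewt
      by_cases h1 : r = 1
      · subst h1
        rw [if_pos (by omega)]
        rw [Finset.sum_range_one] at hnewt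
        simp only [Nat.cast_one, one_mul, pow_zero] at hnewt
        rw [hnewt]
        norm_num
      · rw [if_neg (by omega)]
        have hsum : (∑ j ∈ Finset.range r,
            (-1 : F2) ^ j * (if r - 1 - j ≤ 1 then 1 else 0)) = 0 := by
          have hsub : (∑ j ∈ Finset.range r,
              (-1 : F2) ^ j * (if r - 1 - j ≤ 1 then 1 else 0))
                = ∑ j ∈ ({r - 2, r - 1} : Finset ℕ),
                    (-1 : F2) ^ j * (if r - 1 - j ≤ 1 then 1 else 0) := by
            refine (Finset.sum_subset ?_ ?_).symm
            · intro j hj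
              simp only [Finset.mem_insert, Finset.mem_singleton] at hj
              rw [Finset.mem_range]
              omega
            · intro j hj hj2
              simp only [Finset.mem_insert, Finset.mem_singleton] at hj2
              rw [Finset.mem_range] at hj
              rw [if_neg (by omega), mul_zero]
          rw [hsub, Finset.sum_insert (by simp; omega), Finset.sum_singleton,
            if_pos (by omega), if_pos (by omega), mul_one, mul_one,
            show r - 1 = (r - 2) + 1 by omega, pow_succ]
          ring
        rw [hsum] at hnewt
        have hr0 : (r : F2) ≠ 0 := Nat.cast_ne_zero.mpr h0
        rcases mul_eq_zero.mp hnewt with h | h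
        · exact absurd h hr0
        · exact h

lemma phi_hprod_one {mu : Partition} (hall : ∀ j, mu.part j ≤ 1) :
    MvPolynomial.eval (fun n : ℕ => (-1 : F2) ^ n) (hprod F2 mu) = 1 := by
  rw [hprod, map_prod]
  refine Finset.prod_eq_one fun j _ => ?_
  rw [phi_hsym, if_pos (hall j)]

lemma phi_hprod_zero {mu : Partition} (hall : ¬ ∀ j, mu.part j ≤ 1) :
    MvPolynomial.eval (fun n : ℕ => (-1 : F2) ^ n) (hprod F2 mu) = 0 := by
  rw [hprod, map_prod]
  push_neg at hall
  obtain ⟨j, hj⟩ := hall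
  refine Finset.prod_eq_zero (i := j) (Finsupp.mem_support_iff.mpr (fun hzero => by omega)) ?_
  rw [phi_hsym, if_neg (by omega)]

lemma inner_esym_hom {mm : ℕ} {g : Sym F2} (hg : Hom mm g) :
    innerQT t2 t2 (esym F2 mm) g
      = MvPolynomial.eval (fun n : ℕ => (-1 : F2) ^ n) g := by
  rw [innerQT_eq_sum t2 t2 _ g (S := (esym F2 mm).support ∪ g.support)
    Finset.subset_union_left]
  rw [MvPolynomial.eval_eq]
  rw [show (∑ d ∈ g.support, g.coeff d * ∏ i ∈ d.support, ((-1 : F2) ^ i) ^ d i)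
      = ∑ d ∈ (esym F2 mm).support ∪ g.support,
          g.coeff d * ∏ i ∈ d.support, ((-1 : F2) ^ i) ^ d i from
    Finset.sum_subset Finset.subset_union_right (fun d _ hd => by
      rw [MvPolynomial.notMem_support_iff.mp hd, zero_mul])]
  refine Finset.sum_congr rfl fun d _ => ?_
  by_cases hgd : g.coeff d = 0
  · rw [hgd, mul_zero, zero_mul, zero_mul]
  · have hwt : wt d = mm := hg d hgd
    rw [coeff_esym, if_pos hwt, wgt_tt t2_pow_ne_one]
    have hpr : (∏ i ∈ d.support, ((-1 : F2) ^ i) ^ d i)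
        = (-1 : F2) ^ (∑ i ∈ d.support, i * d i) := by
      rw [← Finset.prod_pow_eq_pow_sum]
      exact Finset.prod_congr rfl fun i _ => by rw [← pow_mul]
    have hexp : (∑ i ∈ d.support, i * d i) = wt d - len d := by
      have h1 : wt d = ∑ i ∈ d.support, (i + 1) * d i := rfl
      have h2 : len d = ∑ i ∈ d.support, d i := rfl
      have h3 : (∑ i ∈ d.support, (i + 1) * d i)
          = (∑ i ∈ d.support, i * d i) + ∑ i ∈ d.support, d i := by
        rw [← Finset.sum_add_distrib]
        exact Finset.sum_congr rfl fun i _ => by ring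
      omega
    rw [hpr, hexp, hwt]
    have hz : (zF d : F2) ≠ 0 := zF_ne_zero d
    field_simp

lemma Hom.neg {n : ℕ} {f : Sym F2} (hf : Hom n f) : Hom n (-f) := by
  intro d hd
  rw [MvPolynomial.coeff_neg] at hd
  exact hf d fun h => hd (by rw [h, neg_zero])

lemma innerQT_neg_left (q t : F2) (f g : Sym F2) :
    innerQT q t (-f) g = -innerQT q t f g := by
  rw [← neg_one_smul F2 f, innerQT_smul_left]
  ring

lemma innerQT_sub_left (q t : F2) (f g h : Sym F2) :
    innerQT q t (f - g) h = innerQT q t f h - innerQT q t g h := by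
  rw [sub_eq_add_neg, innerQT_add_left, innerQT_neg_left, sub_eq_add_neg]

variable (P : Partition → Sym F2) (hP : IsMacdonald q2 t2 P)

include hP in
lemma P_column (m : ℕ) : P (Partition.column m) = esym F2 m := by
  have hcs := column_size m
  have hPc : Hom m (P (Partition.column m)) := by
    have := P_hom P hP (Partition.column m)
    rwa [hcs] at this
  have hhom : Hom m (esym F2 m - P (Partition.column m)) := by
    rw [sub_eq_add_neg]
    exact (Hom.esym m).add hPc.neg
  have hz : esym F2 m - P (Partition.column m) = 0 := by
    refine eq_zero_of_inner_hprod_hom t2_pow_ne_one hhom ?_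
    intro mu hmu
    have hhp : Hom m (hprod F2 mu) := by
      have := Hom.hprod (F := F2) mu
      rwa [hmu] at this
    rw [innerQT_sub_left, inner_esym_hom hhp]
    by_cases hcol : mu = Partition.column m
    · subst hcol
      rw [phi_hprod_one (column_parts_le_one m), hP.2.1, sub_self]
    · have hnall : ¬ (∀ j, mu.part j ≤ 1) := by
        intro hall
        apply hcol
        have h2 := eq_column_of_parts_le_one hall
        rw [hmu] at h2
        exact h2
      rw [phi_hprod_zero hnall, hP.2.2 (Partition.column m) mu ?_, sub_self]
      intro hdom
      apply hnall
      intro j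
      have h1 : mu.psum 1 ≤ (Partition.column m).psum 1 := hdom.2 1
      have hps_mu : mu.psum 1 = mu.part 0 := by
        show (∑ i ∈ Finset.range 1, mu.part i) = mu.part 0
        rw [Finset.sum_range_one]
      have hps_col : (Partition.column m).psum 1 = if 0 < m then 1 else 0 := by
        show (∑ i ∈ Finset.range 1, (Partition.column m).part i) = _
        rw [Finset.sum_range_one, column_part]
      have hmu0 : mu.part 0 ≤ 1 := by
        rw [hps_mu, hps_col] at h1
        split at h1 <;> omega
      have := mu.antitone' (Nat.zero_le j)
      omega
  have := sub_eq_zero.mp hz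
  exact this.symm

end Mac3


section Endgame

open Finset MvPolynomial

variable (P : Partition → Sym F2) (hP : IsMacdonald q2 t2 P)

include hP in
lemma inner_mul_expand {n : ℕ} (g h : Sym F2) (hg : Hom n g) (lam : Partition) :
    innerQT q2 t2 (macQ q2 t2 P lam) (g * h)
      = ∑ mu ∈ Pn n, innerQT q2 t2 (macQ q2 t2 P mu) g
          * innerQT q2 t2 (macQ q2 t2 P lam) (P mu * h) := by
  conv_lhs => rw [expand P hP g hg]
  rw [Finset.sum_mul, innerQT_sum_right]
  refine Finset.sum_congr rfl fun mu _ => ?_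
  rw [smul_mul_assoc, innerQT_smul_right]

end Endgame

/-- `q`-analogue of Konvalinka--Lauve's Theorem 7: for all
partitions `λ, ν` and every `m ≥ 0`,
`∑_{μ : |λ|-|μ| = m} vs_{λ/μ}(q,t) sk_{μ/ν}(q,t) = ∑_μ sk_{μ/(1^m)}(q,t) f_{μν}^λ(q,t)`,
on the left over partitions `μ` with `|μ| = |λ| - m`, on the right over all
partitions `μ`; `(1^m)` is the column of height `m`. -/
theorem vs_sk_theorem7_q_analogue
    (P : Partition → Sym F2) (hP : IsMacdonald q2 t2 P) (lam nu : Partition) (m : ℕ) :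
    (∑ᶠ (mu : Partition) (_ : mu.size + m = lam.size),
        vsM q2 t2 P lam mu * skM q2 t2 P mu nu) =
      ∑ᶠ mu : Partition, skM q2 t2 P mu (Partition.column m) * lr q2 t2 P mu nu lam := by
  classical
  by_cases hmain : m ≤ lam.size ∧ nu.size ≤ lam.size - m
  · obtain ⟨hm, hns⟩ := hmain
    have hLHS : (∑ᶠ (mu : Partition) (_ : mu.size + m = lam.size),
        vsM q2 t2 P lam mu * skM q2 t2 P mu nu)
        = ∑ mu ∈ Pn (lam.size - m), vsM q2 t2 P lam mu * skM q2 t2 P mu nu := by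
      refine finsum_cond_eq_sum_of_cond_iff _ fun {mu} _ => ?_
      rw [mem_Pn]
      omega
    have hRHS : (∑ᶠ mu : Partition,
        skM q2 t2 P mu (Partition.column m) * lr q2 t2 P mu nu lam)
        = ∑ mu ∈ Pn (lam.size - nu.size),
            skM q2 t2 P mu (Partition.column m) * lr q2 t2 P mu nu lam := by
      refine finsum_eq_finset_sum_of_support_subset _ ?_
      intro mu hmu
      rw [Function.mem_support] at hmu
      have hlr : lr q2 t2 P mu nu lam ≠ 0 := fun h => hmu (by rw [h, mul_zero])
      have hsz : mu.size + nu.size = lam.size := by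
        by_contra hc
        exact hlr (lr_eq_zero P hP hc)
      simp only [Finset.coe_sort_coe, Finset.mem_coe]
      rw [mem_Pn]
      omega
    rw [hLHS, hRHS]
    set g := P nu * SkewPieriFormalization.hsym F2 (lam.size - m - nu.size) with hg
    have hgHom : Hom (lam.size - m) g := by
      have h2 := (P_hom P hP nu).mul (Hom.hsym (F := F2) (lam.size - m - nu.size))
      rwa [show nu.size + (lam.size - m - nu.size) = lam.size - m by omega] at h2
    set g' := esym F2 m * SkewPieriFormalization.hsym F2 (lam.size - nu.size - m) with hg'
    have hg'Hom : Hom (lam.size - nu.size) g' := by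
      have h2 := (Hom.esym (F := F2) m).mul
        (Hom.hsym (F := F2) (lam.size - nu.size - m))
      rwa [show m + (lam.size - nu.size - m) = lam.size - nu.size by omega] at h2
    have hL2 : (∑ mu ∈ Pn (lam.size - m), vsM q2 t2 P lam mu * skM q2 t2 P mu nu)
        = innerQT q2 t2 (macQ q2 t2 P lam) (g * esym F2 m) := by
      rw [inner_mul_expand P hP g (esym F2 m) hgHom lam]
      refine Finset.sum_congr rfl fun mu hmu => ?_
      have hsz := mem_Pn.mp hmu
      rw [vs_formula P hP (m := m) (by omega), sk_formula P hP,
        show mu.size - nu.size = lam.size - m - nu.size by omega, ← hg]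
      ring
    have hR2 : (∑ mu ∈ Pn (lam.size - nu.size),
        skM q2 t2 P mu (Partition.column m) * lr q2 t2 P mu nu lam)
        = innerQT q2 t2 (macQ q2 t2 P lam) (g' * P nu) := by
      rw [inner_mul_expand P hP g' (P nu) hg'Hom lam]
      refine Finset.sum_congr rfl fun mu hmu => ?_
      have hsz := mem_Pn.mp hmu
      rw [sk_formula P hP, P_column P hP, column_size,
        show mu.size - m = lam.size - nu.size - m by omega, ← hg']
      rfl
    rw [hL2, hR2]
    congr 1
    rw [hg, hg', show lam.size - m - nu.size = lam.size - nu.size - m by omega]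
    ring
  · have hLHS0 : (∑ᶠ (mu : Partition) (_ : mu.size + m = lam.size),
        vsM q2 t2 P lam mu * skM q2 t2 P mu nu) = 0 := by
      have hz : ∀ mu : Partition, (∑ᶠ _ : mu.size + m = lam.size,
          vsM q2 t2 P lam mu * skM q2 t2 P mu nu) = 0 := by
        intro mu
        rw [finsum_eq_if]
        split
        · next hcond =>
            have hm : m ≤ lam.size := by omega
            have hns : nu.size > lam.size - m := by
              by_contra hc
              exact hmain ⟨hm, by omega⟩
            have hsk : skM q2 t2 P mu nu = 0 := by
              rw [sk_formula P hP]
              exact inner_eq_zero_of_hom (Q_hom P hP mu)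
                ((P_hom P hP nu).mul (Hom.hsym (F := F2) (mu.size - nu.size)))
                (by omega)
            rw [hsk, mul_zero]
        · rfl
      rw [finsum_congr hz, finsum_zero]
    have hRHS0 : (∑ᶠ mu : Partition,
        skM q2 t2 P mu (Partition.column m) * lr q2 t2 P mu nu lam) = 0 := by
      have hz : ∀ mu : Partition,
          skM q2 t2 P mu (Partition.column m) * lr q2 t2 P mu nu lam = 0 := by
        intro mu
        by_cases hlr : lr q2 t2 P mu nu lam = 0
        · rw [hlr, mul_zero]
        · have hsz : mu.size + nu.size = lam.size := by
            by_contra hc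
            exact hlr (lr_eq_zero P hP hc)
          have hlt : mu.size < m := by
            rcases Nat.lt_or_ge lam.size m with h | h
            · omega
            · have hns : nu.size > lam.size - m := by
                by_contra hc
                exact hmain ⟨h, by omega⟩
              omega
          have hg2 : Hom (m + (mu.size - m))
              (P (Partition.column m) * SkewPieriFormalization.hsym F2 (mu.size - m)) := by
            have h2 := (P_hom P hP (Partition.column m)).mul
              (Hom.hsym (F := F2) (mu.size - (Partition.column m).size))
            rwa [column_size] at h2
          have hsk : skM q2 t2 P mu (Partition.column m) = 0 := by
            rw [sk_formula P hP, column_size]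
            exact inner_eq_zero_of_hom (Q_hom P hP mu) hg2 (by omega)
          rw [hsk, zero_mul]
      rw [finsum_congr hz, finsum_zero]
    rw [hLHS0, hRHS0]

end SkewPieriFormalization
end
end
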